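/- arXiv:1905.07615 — 4 statements merged into one kernel-verified Lean document; each statement's English description precedes it below -/
import Mathlib

section
/- Let G be an edge-coloring of K_n with no rainbow triangle, equipped with a Gallai partition in which every part has order at most 3. If the Gallai partition has three parts each of order at least 2 and there are at least five additional vertices outside these three parts, then G contains a monochromatic copy of C_8. -/
/-- The coloring `c` of the edges of the complete graph on `Fin n` contains a rainbow
triangle: three vertices whose three connecting edges receive three distinct colors. -/
def hasRainbowTriangle {n k : ℕ} (c : Sym2 (Fin n) → Fin k) : Prop :=
  ∃ a b d : Fin n, a ≠ b ∧ a ≠ d ∧ b ≠ d ∧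
    c s(a, b) ≠ c s(a, d) ∧ c s(a, b) ≠ c s(b, d) ∧ c s(a, d) ≠ c s(b, d)

/-- The coloring `c` contains a path on `m` vertices all of whose edges receive color `j`. -/
def hasMonoPath {n k : ℕ} (c : Sym2 (Fin n) → Fin k) (m : ℕ) (j : Fin k) : Prop :=
  ∃ v : Fin m → Fin n, Function.Injective v ∧
    ∀ (i : ℕ) (h : i + 1 < m),
      c s(v ⟨i, Nat.lt_of_succ_lt h⟩, v ⟨i + 1, h⟩) = j

/-- The coloring `c` contains a cycle on `m` vertices all of whose edges receive color `j`. -/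
def hasMonoCycle {n k : ℕ} (c : Sym2 (Fin n) → Fin k) (m : ℕ) (j : Fin k) : Prop :=
  ∃ v : Fin m → Fin n, Function.Injective v ∧
    ∀ i : Fin m, c s(v i, v ⟨(i.val + 1) % m, Nat.mod_lt _ i.pos⟩) = j

/-- `P` is a Gallai partition for the coloring `c`: a partition of the vertex set into at
least two parts such that between any two distinct parts all edges get a single color, and
at most two colors total appear between distinct parts. -/
def IsGallaiPartition {n k : ℕ} (c : Sym2 (Fin n) → Fin k)
    (P : Finpartition (Finset.univ : Finset (Fin n))) : Prop :=
  2 ≤ P.parts.card ∧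
  ∃ c1 c2 : Fin k, ∀ A ∈ P.parts, ∀ B ∈ P.parts, A ≠ B →
    (∀ a ∈ A, ∀ b ∈ B, c s(a, b) = c1) ∨ (∀ a ∈ A, ∀ b ∈ B, c s(a, b) = c2)


open Finset

section Infra
variable {n k : ℕ}

lemma cyc8 {c : Sym2 (Fin n) → Fin k} {j : Fin k}
    (v0 v1 v2 v3 v4 v5 v6 v7 : Fin n)
    (e0 : c s(v0, v1) = j) (e1 : c s(v1, v2) = j) (e2 : c s(v2, v3) = j) (e3 : c s(v3, v4) = j) (e4 : c s(v4, v5) = j) (e5 : c s(v5, v6) = j) (e6 : c s(v6, v7) = j) (e7 : c s(v7, v0) = j)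
    (d01 : v0 ≠ v1) (d02 : v0 ≠ v2) (d03 : v0 ≠ v3) (d04 : v0 ≠ v4) (d05 : v0 ≠ v5) (d06 : v0 ≠ v6) (d07 : v0 ≠ v7) (d12 : v1 ≠ v2) (d13 : v1 ≠ v3) (d14 : v1 ≠ v4) (d15 : v1 ≠ v5) (d16 : v1 ≠ v6) (d17 : v1 ≠ v7) (d23 : v2 ≠ v3) (d24 : v2 ≠ v4) (d25 : v2 ≠ v5) (d26 : v2 ≠ v6) (d27 : v2 ≠ v7) (d34 : v3 ≠ v4) (d35 : v3 ≠ v5) (d36 : v3 ≠ v6) (d37 : v3 ≠ v7) (d45 : v4 ≠ v5) (d46 : v4 ≠ v6) (d47 : v4 ≠ v7) (d56 : v5 ≠ v6) (d57 : v5 ≠ v7) (d67 : v6 ≠ v7) :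
    hasMonoCycle c 8 j := by
  refine ⟨fun i => match i with
    | 0 => v0 | 1 => v1 | 2 => v2 | 3 => v3 | 4 => v4 | 5 => v5 | 6 => v6 | 7 => v7, ?_, ?_⟩
  · intro a b h
    fin_cases a <;> fin_cases b <;> first | rfl | exact absurd h d01 | exact absurd h.symm d01 | exact absurd h d02 | exact absurd h.symm d02 | exact absurd h d03 | exact absurd h.symm d03 | exact absurd h d04 | exact absurd h.symm d04 | exact absurd h d05 | exact absurd h.symm d05 | exact absurd h d06 | exact absurd h.symm d06 | exact absurd h d07 | exact absurd h.symm d07 | exact absurd h d12 | exact absurd h.symm d12 | exact absurd h d13 | exact absurd h.symm d13 | exact absurd h d14 | exact absurd h.symm d14 | exact absurd h d15 | exact absurd h.symm d15 | exact absurd h d16 | exact absurd h.symm d16 | exact absurd h d17 | exact absurd h.symm d17 | exact absurd h d23 | exact absurd h.symm d23 | exact absurd h d24 | exact absurd h.symm d24 | exact absurd h d25 | exact absurd h.symm d25 | exact absurd h d26 | exact absurd h.symm d26 | exact absurd h d27 | exact absurd h.symm d27 | exact absurd h d34 | exact absurd h.symm d34 | exact absurd h d35 | exact absurd h.symm d35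 | exact absurd h d36 | exact absurd h.symm d36 | exact absurd h d37 | exact absurd h.symm d37 | exact absurd h d45 | exact absurd h.symm d45 | exact absurd h d46 | exact absurd h.symm d46 | exact absurd h d47 | exact absurd h.symm d47 | exact absurd h d56 | exact absurd h.symm d56 | exact absurd h d57 | exact absurd h.symm d57 | exact absurd h d67 | exact absurd h.symm d67
  · intro i
    fin_cases i <;> first | exact e0 | exact e1 | exact e2 | exact e3 | exact e4 | exact e5 | exact e6 | exact e7

def Lk (c : Sym2 (Fin n) → Fin k) (X Y : Finset (Fin n)) (j : Fin k) : Prop :=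
  ∀ a ∈ X, ∀ b ∈ Y, c s(a, b) = j

lemma Lk.e {c : Sym2 (Fin n) → Fin k} {X Y : Finset (Fin n)} {j : Fin k} {a b : Fin n}
    (h : Lk c X Y j) (ha : a ∈ X) (hb : b ∈ Y) : c s(a, b) = j := h a ha b hb

lemma Lk.e' {c : Sym2 (Fin n) → Fin k} {X Y : Finset (Fin n)} {j : Fin k} {a b : Fin n}
    (h : Lk c X Y j) (ha : a ∈ X) (hb : b ∈ Y) : c s(b, a) = j := by
  rw [Sym2.eq_swap]; exact h a ha b hb

lemma Lk.symm {c : Sym2 (Fin n) → Fin k} {X Y : Finset (Fin n)} {j : Fin k}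
    (h : Lk c X Y j) : Lk c Y X j := fun b hb a ha => by
  rw [Sym2.eq_swap]; exact h a ha b hb

noncomputable def pt (P : Finpartition (Finset.univ : Finset (Fin n))) (x : Fin n) :
    Finset (Fin n) := (P.exists_mem (Finset.mem_univ x)).choose

lemma pt_parts (P : Finpartition (Finset.univ : Finset (Fin n))) (x : Fin n) :
    pt P x ∈ P.parts := (P.exists_mem (Finset.mem_univ x)).choose_spec.1

lemma pt_mem (P : Finpartition (Finset.univ : Finset (Fin n))) (x : Fin n) :
    x ∈ pt P x := (P.exists_mem (Finset.mem_univ x)).choose_spec.2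

lemma pt_eq {P : Finpartition (Finset.univ : Finset (Fin n))} {X : Finset (Fin n)}
    {x : Fin n} (hX : X ∈ P.parts) (hx : x ∈ X) : pt P x = X :=
  P.eq_of_mem_parts (pt_parts P x) hX (pt_mem P x) hx

lemma pick2 {α : Type*} [DecidableEq α] {s : Finset α} (h : 2 ≤ s.card) :
    ∃ a b, a ∈ s ∧ b ∈ s ∧ a ≠ b := by
  obtain ⟨a, ha⟩ := Finset.card_pos.mp (show 0 < s.card by omega)
  have he : 1 ≤ (s.erase a).card := by
    have := Finset.card_erase_of_mem ha; omega
  obtain ⟨b, hb⟩ := Finset.card_pos.mp (show 0 < (s.erase a).card by omega)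
  exact ⟨a, b, ha, Finset.mem_of_mem_erase hb, (Finset.ne_of_mem_erase hb).symm⟩

lemma pick3 {α : Type*} [DecidableEq α] {s : Finset α} (h : 3 ≤ s.card) :
    ∃ a b c, a ∈ s ∧ b ∈ s ∧ c ∈ s ∧ a ≠ b ∧ a ≠ c ∧ b ≠ c := by
  obtain ⟨a, ha⟩ := Finset.card_pos.mp (by omega : 0 < s.card)
  have he : 2 ≤ (s.erase a).card := by
    have := Finset.card_erase_of_mem ha; omega
  obtain ⟨b, c, hb, hc, hbc⟩ := pick2 he
  exact ⟨a, b, c, ha, Finset.mem_of_mem_erase hb, Finset.mem_of_mem_erase hc,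
    (Finset.ne_of_mem_erase hb).symm, (Finset.ne_of_mem_erase hc).symm, hbc⟩

lemma pick4 {α : Type*} [DecidableEq α] {s : Finset α} (h : 4 ≤ s.card) :
    ∃ a b c d, a ∈ s ∧ b ∈ s ∧ c ∈ s ∧ d ∈ s ∧ a ≠ b ∧ a ≠ c ∧ a ≠ d ∧ b ≠ c ∧ b ≠ d ∧ c ≠ d := by
  obtain ⟨a, ha⟩ := Finset.card_pos.mp (by omega : 0 < s.card)
  have he : 3 ≤ (s.erase a).card := by
    have := Finset.card_erase_of_mem ha; omega
  obtain ⟨b, c, d, hb, hc, hd, h1, h2, h3⟩ := pick3 he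
  exact ⟨a, b, c, d, ha, Finset.mem_of_mem_erase hb, Finset.mem_of_mem_erase hc,
    Finset.mem_of_mem_erase hd, (Finset.ne_of_mem_erase hb).symm,
    (Finset.ne_of_mem_erase hc).symm, (Finset.ne_of_mem_erase hd).symm, h1, h2, h3⟩

lemma pick5 {α : Type*} [DecidableEq α] {s : Finset α} (h : 5 ≤ s.card) :
    ∃ a b c d e, a ∈ s ∧ b ∈ s ∧ c ∈ s ∧ d ∈ s ∧ e ∈ s ∧ a ≠ b ∧ a ≠ c ∧ a ≠ d ∧ a ≠ e ∧
      b ≠ c ∧ b ≠ d ∧ b ≠ e ∧ c ≠ d ∧ c ≠ e ∧ d ≠ e := by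
  obtain ⟨a, ha⟩ := Finset.card_pos.mp (by omega : 0 < s.card)
  have he : 4 ≤ (s.erase a).card := by
    have := Finset.card_erase_of_mem ha; omega
  obtain ⟨b, c, d, e, hb, hc, hd, he', h1, h2, h3, h4, h5, h6⟩ := pick4 he
  exact ⟨a, b, c, d, e, ha, Finset.mem_of_mem_erase hb, Finset.mem_of_mem_erase hc,
    Finset.mem_of_mem_erase hd, Finset.mem_of_mem_erase he', (Finset.ne_of_mem_erase hb).symm,
    (Finset.ne_of_mem_erase hc).symm, (Finset.ne_of_mem_erase hd).symm,
    (Finset.ne_of_mem_erase he').symm, h1, h2, h3, h4, h5, h6⟩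

structure Ctx (n k : ℕ) (c : Sym2 (Fin n) → Fin k) where
  P : Finpartition (Finset.univ : Finset (Fin n))
  r : Fin k
  rb : Fin k
  hor : ∀ X ∈ P.parts, ∀ Y ∈ P.parts, X ≠ Y → Lk c X Y r ∨ Lk c X Y rb
  Ext : Finset (Fin n)
  hext : 5 ≤ Ext.card
  A : Finset (Fin n)
  B : Finset (Fin n)
  C : Finset (Fin n)
  hA : A ∈ P.parts
  hB : B ∈ P.parts
  hC : C ∈ P.parts
  hAB : A ≠ B
  hAC : A ≠ C
  hBC : B ≠ C
  a0 : Fin n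
  a1 : Fin n
  b0 : Fin n
  b1 : Fin n
  c0 : Fin n
  c1 : Fin n
  ha0 : a0 ∈ A
  ha1 : a1 ∈ A
  haa : a0 ≠ a1
  hb0 : b0 ∈ B
  hb1 : b1 ∈ B
  hbb : b0 ≠ b1
  hc0 : c0 ∈ C
  hc1 : c1 ∈ C
  hcc : c0 ≠ c1
  hpart : ∀ x : Fin n, x ∉ A → x ∉ B → x ∉ C → x ∈ Ext
  hEA : ∀ x ∈ Ext, x ∉ A
  hEB : ∀ x ∈ Ext, x ∉ B
  hEC : ∀ x ∈ Ext, x ∉ C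

namespace Ctx
variable {c : Sym2 (Fin n) → Fin k} (G : Ctx n k c)

lemma vne {X Y : Finset (Fin n)} {x y : Fin n} (hX : X ∈ G.P.parts) (hY : Y ∈ G.P.parts)
    (hXY : X ≠ Y) (hx : x ∈ X) (hy : y ∈ Y) : x ≠ y := fun h =>
  Finset.disjoint_left.mp (G.P.disjoint hX hY hXY) hx (h ▸ hy)

lemma ptm (x : Fin n) : x ∈ pt G.P x := pt_mem G.P x

lemma ptp (x : Fin n) : pt G.P x ∈ G.P.parts := pt_parts G.P x

lemma pt_ne_A {x : Fin n} (hx : x ∈ G.Ext) : pt G.P x ≠ G.A := fun h =>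
  G.hEA x hx (h ▸ G.ptm x)

lemma pt_ne_B {x : Fin n} (hx : x ∈ G.Ext) : pt G.P x ≠ G.B := fun h =>
  G.hEB x hx (h ▸ G.ptm x)

lemma pt_ne_C {x : Fin n} (hx : x ∈ G.Ext) : pt G.P x ≠ G.C := fun h =>
  G.hEC x hx (h ▸ G.ptm x)

lemma lkor {X Y : Finset (Fin n)} (hX : X ∈ G.P.parts) (hY : Y ∈ G.P.parts) (hXY : X ≠ Y) :
    Lk c X Y G.r ∨ Lk c X Y G.rb := G.hor X hX Y hY hXY

lemma lk_rb {X Y : Finset (Fin n)} (hX : X ∈ G.P.parts) (hY : Y ∈ G.P.parts) (hXY : X ≠ Y)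
    (h : ¬ Lk c X Y G.r) : Lk c X Y G.rb := (G.lkor hX hY hXY).resolve_left h

end Ctx
end Infra
lemma Ctx.T10L {n k : ℕ} {c : Sym2 (Fin n) → Fin k} (G : Ctx n k c) (j : Fin k)
    {Pp Qq : Finset (Fin n)} (hPp : Pp ∈ G.P.parts) (hQq : Qq ∈ G.P.parts) (hPQ : Pp ≠ Qq)
    {p0 p1 q0 q1 : Fin n} (hp0 : p0 ∈ Pp) (hp1 : p1 ∈ Pp) (hpp : p0 ≠ p1)
    (hq0 : q0 ∈ Qq) (hq1 : q1 ∈ Qq) (hqq : q0 ≠ q1)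
    {e1 e2 e3 e4 : Fin n}
    (n12 : e1 ≠ e2) (n13 : e1 ≠ e3) (n14 : e1 ≠ e4) (n23 : e2 ≠ e3) (n24 : e2 ≠ e4) (n34 : e3 ≠ e4)
    (hP1 : Lk c (pt G.P e1) Pp j) (hP2 : Lk c (pt G.P e2) Pp j)
    (hP3 : Lk c (pt G.P e3) Pp j) (hP4 : Lk c (pt G.P e4) Pp j)
    (hQ1 : Lk c (pt G.P e1) Qq j) (hQ2 : Lk c (pt G.P e2) Qq j)
    (hQ3 : Lk c (pt G.P e3) Qq j) (hQ4 : Lk c (pt G.P e4) Qq j)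
    (hnp1 : pt G.P e1 ≠ Pp) (hnp2 : pt G.P e2 ≠ Pp) (hnp3 : pt G.P e3 ≠ Pp) (hnp4 : pt G.P e4 ≠ Pp)
    (hnq1 : pt G.P e1 ≠ Qq) (hnq2 : pt G.P e2 ≠ Qq) (hnq3 : pt G.P e3 ≠ Qq) (hnq4 : pt G.P e4 ≠ Qq) :
    ∃ j' : Fin k, hasMonoCycle c 8 j' := by
  exact ⟨j, cyc8 p0 e1 q0 e2 p1 e3 q1 e4 (hP1.e' (G.ptm e1) hp0) (hQ1.e (G.ptm e1) hq0) 
    (hQ2.e' (G.ptm e2) hq0) (hP2.e (G.ptm e2) hp1) (hP3.e' (G.ptm e3) hp1) 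
    (hQ3.e (G.ptm e3) hq1) (hQ4.e' (G.ptm e4) hq1) (hP4.e (G.ptm e4) hp0) 
    (G.vne hPp (G.ptp e1) (Ne.symm (hnp1)) (hp0) (G.ptm e1)) (G.vne hPp hQq (hPQ) (hp0) (hq0)) 
    (G.vne hPp (G.ptp e2) (Ne.symm (hnp2)) (hp0) (G.ptm e2)) (hpp) 
    (G.vne hPp (G.ptp e3) (Ne.symm (hnp3)) (hp0) (G.ptm e3)) (G.vne hPp hQq (hPQ) (hp0) (hq1)) 
    (G.vne hPp (G.ptp e4) (Ne.symm (hnp4)) (hp0) (G.ptm e4)) 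
    (G.vne (G.ptp e1) hQq (hnq1) (G.ptm e1) (hq0)) (n12) 
    (G.vne (G.ptp e1) hPp (hnp1) (G.ptm e1) (hp1)) (n13) 
    (G.vne (G.ptp e1) hQq (hnq1) (G.ptm e1) (hq1)) (n14) 
    (G.vne hQq (G.ptp e2) (Ne.symm (hnq2)) (hq0) (G.ptm e2)) 
    (G.vne hQq hPp (Ne.symm (hPQ)) (hq0) (hp1)) 
    (G.vne hQq (G.ptp e3) (Ne.symm (hnq3)) (hq0) (G.ptm e3)) (hqq) 
    (G.vne hQq (G.ptp e4) (Ne.symm (hnq4)) (hq0) (G.ptm e4)) 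
    (G.vne (G.ptp e2) hPp (hnp2) (G.ptm e2) (hp1)) (n23) 
    (G.vne (G.ptp e2) hQq (hnq2) (G.ptm e2) (hq1)) (n24) 
    (G.vne hPp (G.ptp e3) (Ne.symm (hnp3)) (hp1) (G.ptm e3)) (G.vne hPp hQq (hPQ) (hp1) (hq1)) 
    (G.vne hPp (G.ptp e4) (Ne.symm (hnp4)) (hp1) (G.ptm e4)) 
    (G.vne (G.ptp e3) hQq (hnq3) (G.ptm e3) (hq1)) (n34) 
    (G.vne hQq (G.ptp e4) (Ne.symm (hnq4)) (hq1) (G.ptm e4))⟩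

lemma Ctx.T3L {n k : ℕ} {c : Sym2 (Fin n) → Fin k} (G : Ctx n k c) (j : Fin k)
    {Pp Qq Rr : Finset (Fin n)} (hPp : Pp ∈ G.P.parts) (hQq : Qq ∈ G.P.parts)
    (hRr : Rr ∈ G.P.parts) (hPQ : Pp ≠ Qq) (hPR2 : Pp ≠ Rr) (hQR2 : Qq ≠ Rr)
    {p0 p1 q0 q1 r0 r1 : Fin n} (hp0 : p0 ∈ Pp) (hp1 : p1 ∈ Pp) (hpp : p0 ≠ p1)
    (hq0 : q0 ∈ Qq) (hq1 : q1 ∈ Qq) (hqq : q0 ≠ q1)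
    (hr0 : r0 ∈ Rr) (hr1 : r1 ∈ Rr) (hrr : r0 ≠ r1)
    {x y : Fin n} (nxy : x ≠ y)
    (hxP : Lk c (pt G.P x) Pp j) (hyQ : Lk c (pt G.P y) Qq j)
    (hPR : Lk c Pp Rr j) (hRQ : Lk c Rr Qq j)
    (hnxP : pt G.P x ≠ Pp) (hnxQ : pt G.P x ≠ Qq) (hnxR : pt G.P x ≠ Rr)
    (hnyP : pt G.P y ≠ Pp) (hnyQ : pt G.P y ≠ Qq) (hnyR : pt G.P y ≠ Rr) :
    ∃ j' : Fin k, hasMonoCycle c 8 j' := by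
  exact ⟨j, cyc8 x p0 r0 q0 y q1 r1 p1 (hxP.e (G.ptm x) hp0) (hPR.e hp0 hr0) (hRQ.e hr0 hq0) 
    (hyQ.e' (G.ptm y) hq0) (hyQ.e (G.ptm y) hq1) (hRQ.e' hr1 hq1) (hPR.e' hp1 hr1) 
    (hxP.e' (G.ptm x) hp1) (G.vne (G.ptp x) hPp (hnxP) (G.ptm x) (hp0)) 
    (G.vne (G.ptp x) hRr (hnxR) (G.ptm x) (hr0)) (G.vne (G.ptp x) hQq (hnxQ) (G.ptm x) (hq0)) 
    (nxy) (G.vne (G.ptp x) hQq (hnxQ) (G.ptm x) (hq1)) 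
    (G.vne (G.ptp x) hRr (hnxR) (G.ptm x) (hr1)) (G.vne (G.ptp x) hPp (hnxP) (G.ptm x) (hp1)) 
    (G.vne hPp hRr (hPR2) (hp0) (hr0)) (G.vne hPp hQq (hPQ) (hp0) (hq0)) 
    (G.vne hPp (G.ptp y) (Ne.symm (hnyP)) (hp0) (G.ptm y)) (G.vne hPp hQq (hPQ) (hp0) (hq1)) 
    (G.vne hPp hRr (hPR2) (hp0) (hr1)) (hpp) (G.vne hRr hQq (Ne.symm (hQR2)) (hr0) (hq0)) 
    (G.vne hRr (G.ptp y) (Ne.symm (hnyR)) (hr0) (G.ptm y)) 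
    (G.vne hRr hQq (Ne.symm (hQR2)) (hr0) (hq1)) (hrr) 
    (G.vne hRr hPp (Ne.symm (hPR2)) (hr0) (hp1)) 
    (G.vne hQq (G.ptp y) (Ne.symm (hnyQ)) (hq0) (G.ptm y)) (hqq) 
    (G.vne hQq hRr (hQR2) (hq0) (hr1)) (G.vne hQq hPp (Ne.symm (hPQ)) (hq0) (hp1)) 
    (G.vne (G.ptp y) hQq (hnyQ) (G.ptm y) (hq1)) (G.vne (G.ptp y) hRr (hnyR) (G.ptm y) (hr1)) 
    (G.vne (G.ptp y) hPp (hnyP) (G.ptm y) (hp1)) (G.vne hQq hRr (hQR2) (hq1) (hr1)) 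
    (G.vne hQq hPp (Ne.symm (hPQ)) (hq1) (hp1)) (G.vne hRr hPp (Ne.symm (hPR2)) (hr1) (hp1))⟩

lemma Ctx.T2L {n k : ℕ} {c : Sym2 (Fin n) → Fin k} (G : Ctx n k c) (j : Fin k)
    {Pp Qq Rr : Finset (Fin n)} (hPp : Pp ∈ G.P.parts) (hQq : Qq ∈ G.P.parts)
    (hRr : Rr ∈ G.P.parts) (hPQ : Pp ≠ Qq) (hPR2 : Pp ≠ Rr) (hQR2 : Qq ≠ Rr)
    {p0 p1 q0 q1 r0 r1 : Fin n} (hp0 : p0 ∈ Pp) (hp1 : p1 ∈ Pp) (hpp : p0 ≠ p1)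
    (hq0 : q0 ∈ Qq) (hq1 : q1 ∈ Qq) (hqq : q0 ≠ q1)
    (hr0 : r0 ∈ Rr) (hr1 : r1 ∈ Rr) (hrr : r0 ≠ r1)
    {x x2 : Fin n} (nxx2 : x ≠ x2) (hx2m : x2 ∈ pt G.P x)
    (hxP : Lk c (pt G.P x) Pp j) (hxQ : Lk c (pt G.P x) Qq j)
    (hPR : Lk c Pp Rr j) (hRQ : Lk c Rr Qq j)
    (hnxP : pt G.P x ≠ Pp) (hnxQ : pt G.P x ≠ Qq) (hnxR : pt G.P x ≠ Rr) :
    ∃ j' : Fin k, hasMonoCycle c 8 j' := by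
  exact ⟨j, cyc8 x p0 r0 q0 x2 p1 r1 q1 (hxP.e (G.ptm x) hp0) (hPR.e hp0 hr0) (hRQ.e hr0 hq0) 
    (hxQ.e' hx2m hq0) (hxP.e hx2m hp1) (hPR.e hp1 hr1) (hRQ.e hr1 hq1) (hxQ.e' (G.ptm x) hq1) 
    (G.vne (G.ptp x) hPp (hnxP) (G.ptm x) (hp0)) (G.vne (G.ptp x) hRr (hnxR) (G.ptm x) (hr0)) 
    (G.vne (G.ptp x) hQq (hnxQ) (G.ptm x) (hq0)) (nxx2) 
    (G.vne (G.ptp x) hPp (hnxP) (G.ptm x) (hp1)) (G.vne (G.ptp x) hRr (hnxR) (G.ptm x) (hr1)) 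
    (G.vne (G.ptp x) hQq (hnxQ) (G.ptm x) (hq1)) (G.vne hPp hRr (hPR2) (hp0) (hr0)) 
    (G.vne hPp hQq (hPQ) (hp0) (hq0)) (G.vne hPp (G.ptp x) (Ne.symm (hnxP)) (hp0) (hx2m)) (hpp) 
    (G.vne hPp hRr (hPR2) (hp0) (hr1)) (G.vne hPp hQq (hPQ) (hp0) (hq1)) 
    (G.vne hRr hQq (Ne.symm (hQR2)) (hr0) (hq0)) 
    (G.vne hRr (G.ptp x) (Ne.symm (hnxR)) (hr0) (hx2m)) 
    (G.vne hRr hPp (Ne.symm (hPR2)) (hr0) (hp1)) (hrr) 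
    (G.vne hRr hQq (Ne.symm (hQR2)) (hr0) (hq1)) 
    (G.vne hQq (G.ptp x) (Ne.symm (hnxQ)) (hq0) (hx2m)) 
    (G.vne hQq hPp (Ne.symm (hPQ)) (hq0) (hp1)) (G.vne hQq hRr (hQR2) (hq0) (hr1)) (hqq) 
    (G.vne (G.ptp x) hPp (hnxP) (hx2m) (hp1)) (G.vne (G.ptp x) hRr (hnxR) (hx2m) (hr1)) 
    (G.vne (G.ptp x) hQq (hnxQ) (hx2m) (hq1)) (G.vne hPp hRr (hPR2) (hp1) (hr1)) 
    (G.vne hPp hQq (hPQ) (hp1) (hq1)) (G.vne hRr hQq (Ne.symm (hQR2)) (hr1) (hq1))⟩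

lemma third {α : Type*} [DecidableEq α] {s : Finset α} (h : 3 ≤ s.card) (u t : α) :
    ∃ v ∈ s, v ≠ u ∧ v ≠ t := by
  obtain ⟨a, b, c', ha, hb, hc, nab, nac, nbc⟩ := pick3 h
  by_cases h1 : a ≠ u ∧ a ≠ t
  · exact ⟨a, ha, h1⟩
  by_cases h2 : b ≠ u ∧ b ≠ t
  · exact ⟨b, hb, h2⟩
  by_cases h3 : c' ≠ u ∧ c' ≠ t
  · exact ⟨c', hc, h3⟩
  push_neg at h1 h2 h3
  by_cases hau : a = u
  · by_cases hbu : b = u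
    · exact absurd (hau.trans hbu.symm) nab
    · have hbt := h2 hbu
      by_cases hcu : c' = u
      · exact absurd (hau.trans hcu.symm) nac
      · exact absurd ((h3 hcu).trans hbt.symm) nbc.symm
  · have hat := h1 hau
    by_cases hbu : b = u
    · by_cases hcu : c' = u
      · exact absurd (hbu.trans hcu.symm) nbc
      · exact absurd (hat.trans (h3 hcu).symm) nac
    · exact absurd (hat.trans (h2 hbu).symm) nab
def Ctx.swapBC {n k : ℕ} {c : Sym2 (Fin n) → Fin k} (G : Ctx n k c) : Ctx n k c where
  P := G.P
  r := G.r
  rb := G.rb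
  hor := G.hor
  Ext := G.Ext
  hext := G.hext
  A := G.A
  B := G.C
  C := G.B
  hA := G.hA
  hB := G.hC
  hC := G.hB
  hAB := G.hAC
  hAC := G.hAB
  hBC := G.hBC.symm
  a0 := G.a0
  a1 := G.a1
  b0 := G.c0
  b1 := G.c1
  c0 := G.b0
  c1 := G.b1
  ha0 := G.ha0
  ha1 := G.ha1
  haa := G.haa
  hb0 := G.hc0
  hb1 := G.hc1
  hbb := G.hcc
  hc0 := G.hb0
  hc1 := G.hb1
  hcc := G.hbb
  hpart := fun x h1 h2 h3 => G.hpart x h1 h3 h2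
  hEA := G.hEA
  hEB := G.hEC
  hEC := G.hEB

def Ctx.permBAC {n k : ℕ} {c : Sym2 (Fin n) → Fin k} (G : Ctx n k c) : Ctx n k c where
  P := G.P
  r := G.r
  rb := G.rb
  hor := G.hor
  Ext := G.Ext
  hext := G.hext
  A := G.B
  B := G.A
  C := G.C
  hA := G.hB
  hB := G.hA
  hC := G.hC
  hAB := G.hAB.symm
  hAC := G.hBC
  hBC := G.hAC
  a0 := G.b0
  a1 := G.b1
  b0 := G.a0
  b1 := G.a1
  c0 := G.c0
  c1 := G.c1
  ha0 := G.hb0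
  ha1 := G.hb1
  haa := G.hbb
  hb0 := G.ha0
  hb1 := G.ha1
  hbb := G.haa
  hc0 := G.hc0
  hc1 := G.hc1
  hcc := G.hcc
  hpart := fun x h1 h2 h3 => G.hpart x h2 h1 h3
  hEA := G.hEB
  hEB := G.hEA
  hEC := G.hEC

def Ctx.permCABflip {n k : ℕ} {c : Sym2 (Fin n) → Fin k} (G : Ctx n k c) : Ctx n k c where
  P := G.P
  r := G.rb
  rb := G.r
  hor := fun X hX Y hY h => (G.hor X hX Y hY h).symm
  Ext := G.Ext
  hext := G.hext
  A := G.C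
  B := G.A
  C := G.B
  hA := G.hC
  hB := G.hA
  hC := G.hB
  hAB := G.hAC.symm
  hAC := G.hBC.symm
  hBC := G.hAB
  a0 := G.c0
  a1 := G.c1
  b0 := G.a0
  b1 := G.a1
  c0 := G.b0
  c1 := G.b1
  ha0 := G.hc0
  ha1 := G.hc1
  haa := G.hcc
  hb0 := G.ha0
  hb1 := G.ha1
  hbb := G.haa
  hc0 := G.hb0
  hc1 := G.hb1
  hcc := G.hbb
  hpart := fun x h1 h2 h3 => G.hpart x h2 h3 h1
  hEA := G.hEC
  hEB := G.hEA
  hEC := G.hEB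

lemma Ctx.case2c {n k : ℕ} {c : Sym2 (Fin n) → Fin k} (G : Ctx n k c)
    (hLAB : Lk c G.A G.B G.r) (hLAC : Lk c G.A G.C G.r) (hLBC : Lk c G.B G.C G.rb)
    (hallC : ∀ x ∈ G.Ext, Lk c (pt G.P x) G.C G.rb) :
    ∃ j : Fin k, hasMonoCycle c 8 j := by
  classical
  set Sv := G.Ext.filter (fun x => Lk c (pt G.P x) G.B G.rb) with hSvdef
  have hSvsub : Sv ⊆ G.Ext := Finset.filter_subset _ _
  have hSvB : ∀ x ∈ Sv, Lk c (pt G.P x) G.B G.rb := fun x hx => (Finset.mem_filter.mp hx).2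
  have hSvE : ∀ x ∈ Sv, x ∈ G.Ext := fun x hx => hSvsub hx
  have hRB : ∀ x ∈ G.Ext \ Sv, Lk c (pt G.P x) G.B G.r := by
    intro x hx
    obtain ⟨hxE, hxn⟩ := Finset.mem_sdiff.mp hx
    refine (G.lkor (G.ptp x) G.hB (G.pt_ne_B hxE)).resolve_right ?_
    intro hrb; exact hxn (Finset.mem_filter.mpr ⟨hxE, hrb⟩)
  have hRBE : ∀ x ∈ G.Ext \ Sv, x ∈ G.Ext := fun x hx => (Finset.mem_sdiff.mp hx).1
  have hRBnS : ∀ x ∈ G.Ext \ Sv, x ∉ Sv := fun x hx => (Finset.mem_sdiff.mp hx).2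
  have hsdc : (G.Ext \ Sv).card = G.Ext.card - Sv.card := Finset.card_sdiff_of_subset hSvsub
  by_cases h4 : 4 ≤ Sv.card
  · obtain ⟨e1, e2, e3, e4, he1, he2, he3, he4, n12, n13, n14, n23, n24, n34⟩ := pick4 h4
    exact ⟨G.rb, cyc8 G.b0 e1 G.c0 e2 G.b1 e3 G.c1 e4 ((hSvB e1 he1).e' (G.ptm e1) G.hb0) 
      ((hallC e1 (hSvE e1 he1)).e (G.ptm e1) G.hc0) 
      ((hallC e2 (hSvE e2 he2)).e' (G.ptm e2) G.hc0) ((hSvB e2 he2).e (G.ptm e2) G.hb1) 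
      ((hSvB e3 he3).e' (G.ptm e3) G.hb1) ((hallC e3 (hSvE e3 he3)).e (G.ptm e3) G.hc1) 
      ((hallC e4 (hSvE e4 he4)).e' (G.ptm e4) G.hc1) ((hSvB e4 he4).e (G.ptm e4) G.hb0) 
      (G.vne G.hB (G.ptp e1) (Ne.symm (G.pt_ne_B (hSvE e1 he1))) (G.hb0) (G.ptm e1)) 
      (G.vne G.hB G.hC (G.hBC) (G.hb0) (G.hc0)) 
      (G.vne G.hB (G.ptp e2) (Ne.symm (G.pt_ne_B (hSvE e2 he2))) (G.hb0) (G.ptm e2)) (G.hbb) 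
      (G.vne G.hB (G.ptp e3) (Ne.symm (G.pt_ne_B (hSvE e3 he3))) (G.hb0) (G.ptm e3)) 
      (G.vne G.hB G.hC (G.hBC) (G.hb0) (G.hc1)) 
      (G.vne G.hB (G.ptp e4) (Ne.symm (G.pt_ne_B (hSvE e4 he4))) (G.hb0) (G.ptm e4)) 
      (G.vne (G.ptp e1) G.hC (G.pt_ne_C (hSvE e1 he1)) (G.ptm e1) (G.hc0)) (n12) 
      (G.vne (G.ptp e1) G.hB (G.pt_ne_B (hSvE e1 he1)) (G.ptm e1) (G.hb1)) (n13) 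
      (G.vne (G.ptp e1) G.hC (G.pt_ne_C (hSvE e1 he1)) (G.ptm e1) (G.hc1)) (n14) 
      (G.vne G.hC (G.ptp e2) (Ne.symm (G.pt_ne_C (hSvE e2 he2))) (G.hc0) (G.ptm e2)) 
      (G.vne G.hC G.hB (Ne.symm (G.hBC)) (G.hc0) (G.hb1)) 
      (G.vne G.hC (G.ptp e3) (Ne.symm (G.pt_ne_C (hSvE e3 he3))) (G.hc0) (G.ptm e3)) (G.hcc) 
      (G.vne G.hC (G.ptp e4) (Ne.symm (G.pt_ne_C (hSvE e4 he4))) (G.hc0) (G.ptm e4)) 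
      (G.vne (G.ptp e2) G.hB (G.pt_ne_B (hSvE e2 he2)) (G.ptm e2) (G.hb1)) (n23) 
      (G.vne (G.ptp e2) G.hC (G.pt_ne_C (hSvE e2 he2)) (G.ptm e2) (G.hc1)) (n24) 
      (G.vne G.hB (G.ptp e3) (Ne.symm (G.pt_ne_B (hSvE e3 he3))) (G.hb1) (G.ptm e3)) 
      (G.vne G.hB G.hC (G.hBC) (G.hb1) (G.hc1)) 
      (G.vne G.hB (G.ptp e4) (Ne.symm (G.pt_ne_B (hSvE e4 he4))) (G.hb1) (G.ptm e4)) 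
      (G.vne (G.ptp e3) G.hC (G.pt_ne_C (hSvE e3 he3)) (G.ptm e3) (G.hc1)) (n34) 
      (G.vne G.hC (G.ptp e4) (Ne.symm (G.pt_ne_C (hSvE e4 he4))) (G.hc1) (G.ptm e4))⟩
  by_cases h3c : 3 ≤ Sv.card
  · obtain ⟨s1, s2, s3, hs1, hs2, hs3, m12, m13, m23⟩ := pick3 h3c
    obtain ⟨x, hx⟩ := Finset.card_pos.mp (show 0 < (G.Ext \ Sv).card by
      have := G.hext; omega)
    have hxE := hRBE x hx
    exact ⟨G.rb, cyc8 G.b0 s1 G.c0 x G.c1 s2 G.b1 s3 ((hSvB s1 hs1).e' (G.ptm s1) G.hb0) 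
      ((hallC s1 (hSvE s1 hs1)).e (G.ptm s1) G.hc0) ((hallC x hxE).e' (G.ptm x) G.hc0) 
      ((hallC x hxE).e (G.ptm x) G.hc1) ((hallC s2 (hSvE s2 hs2)).e' (G.ptm s2) G.hc1) 
      ((hSvB s2 hs2).e (G.ptm s2) G.hb1) ((hSvB s3 hs3).e' (G.ptm s3) G.hb1) 
      ((hSvB s3 hs3).e (G.ptm s3) G.hb0) 
      (G.vne G.hB (G.ptp s1) (Ne.symm (G.pt_ne_B (hSvE s1 hs1))) (G.hb0) (G.ptm s1)) 
      (G.vne G.hB G.hC (G.hBC) (G.hb0) (G.hc0)) 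
      (G.vne G.hB (G.ptp x) (Ne.symm (G.pt_ne_B (hxE))) (G.hb0) (G.ptm x)) 
      (G.vne G.hB G.hC (G.hBC) (G.hb0) (G.hc1)) 
      (G.vne G.hB (G.ptp s2) (Ne.symm (G.pt_ne_B (hSvE s2 hs2))) (G.hb0) (G.ptm s2)) (G.hbb) 
      (G.vne G.hB (G.ptp s3) (Ne.symm (G.pt_ne_B (hSvE s3 hs3))) (G.hb0) (G.ptm s3)) 
      (G.vne (G.ptp s1) G.hC (G.pt_ne_C (hSvE s1 hs1)) (G.ptm s1) (G.hc0)) 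
      (Ne.symm ((fun h => hRBnS x hx (by rw [h]; exact hs1)) : x ≠ s1)) 
      (G.vne (G.ptp s1) G.hC (G.pt_ne_C (hSvE s1 hs1)) (G.ptm s1) (G.hc1)) (m12) 
      (G.vne (G.ptp s1) G.hB (G.pt_ne_B (hSvE s1 hs1)) (G.ptm s1) (G.hb1)) (m13) 
      (G.vne G.hC (G.ptp x) (Ne.symm (G.pt_ne_C (hxE))) (G.hc0) (G.ptm x)) (G.hcc) 
      (G.vne G.hC (G.ptp s2) (Ne.symm (G.pt_ne_C (hSvE s2 hs2))) (G.hc0) (G.ptm s2)) 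
      (G.vne G.hC G.hB (Ne.symm (G.hBC)) (G.hc0) (G.hb1)) 
      (G.vne G.hC (G.ptp s3) (Ne.symm (G.pt_ne_C (hSvE s3 hs3))) (G.hc0) (G.ptm s3)) 
      (G.vne (G.ptp x) G.hC (G.pt_ne_C (hxE)) (G.ptm x) (G.hc1)) 
      (fun h => hRBnS x hx (by rw [h]; exact hs2)) 
      (G.vne (G.ptp x) G.hB (G.pt_ne_B (hxE)) (G.ptm x) (G.hb1)) 
      (fun h => hRBnS x hx (by rw [h]; exact hs3)) 
      (G.vne G.hC (G.ptp s2) (Ne.symm (G.pt_ne_C (hSvE s2 hs2))) (G.hc1) (G.ptm s2)) 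
      (G.vne G.hC G.hB (Ne.symm (G.hBC)) (G.hc1) (G.hb1)) 
      (G.vne G.hC (G.ptp s3) (Ne.symm (G.pt_ne_C (hSvE s3 hs3))) (G.hc1) (G.ptm s3)) 
      (G.vne (G.ptp s2) G.hB (G.pt_ne_B (hSvE s2 hs2)) (G.ptm s2) (G.hb1)) (m23) 
      (G.vne G.hB (G.ptp s3) (Ne.symm (G.pt_ne_B (hSvE s3 hs3))) (G.hb1) (G.ptm s3))⟩
  -- Sv.card ≤ 2
  have hRBcard : 3 ≤ (G.Ext \ Sv).card := by have := G.hext; omega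
  by_cases hw3 : ∃ x ∈ G.Ext \ Sv, ∃ y ∈ G.Ext \ Sv, ∃ z ∈ G.Ext \ Sv,
      x ≠ y ∧ x ≠ z ∧ y ≠ z ∧ pt G.P y = pt G.P x ∧ pt G.P z = pt G.P x
  · obtain ⟨x, hx, y, hy, z, hz, nxy, nxz, nyz, hyx, hzx⟩ := hw3
    have hxE := hRBE x hx
    have hym : y ∈ pt G.P x := hyx ▸ G.ptm y
    have hzm : z ∈ pt G.P x := hzx ▸ G.ptm z
    have hxB : Lk c (pt G.P x) G.B G.r := hRB x hx
    have hxC : Lk c (pt G.P x) G.C G.rb := hallC x hxE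
    by_cases hXA : Lk c (pt G.P x) G.A G.r
    · exact ⟨G.r, cyc8 G.a0 G.c0 G.a1 x G.b0 y G.b1 z (hLAC.e G.ha0 G.hc0) 
        (hLAC.e' G.ha1 G.hc0) (hXA.e' (G.ptm x) G.ha1) (hxB.e (G.ptm x) G.hb0) 
        (hxB.e' hym G.hb0) (hxB.e hym G.hb1) (hxB.e' hzm G.hb1) (hXA.e hzm G.ha0) 
        (G.vne G.hA G.hC (G.hAC) (G.ha0) (G.hc0)) (G.haa) 
        (G.vne G.hA (G.ptp x) (Ne.symm (G.pt_ne_A (hxE))) (G.ha0) (G.ptm x)) 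
        (G.vne G.hA G.hB (G.hAB) (G.ha0) (G.hb0)) 
        (G.vne G.hA (G.ptp x) (Ne.symm (G.pt_ne_A (hxE))) (G.ha0) (hym)) 
        (G.vne G.hA G.hB (G.hAB) (G.ha0) (G.hb1)) 
        (G.vne G.hA (G.ptp x) (Ne.symm (G.pt_ne_A (hxE))) (G.ha0) (hzm)) 
        (G.vne G.hC G.hA (Ne.symm (G.hAC)) (G.hc0) (G.ha1)) 
        (G.vne G.hC (G.ptp x) (Ne.symm (G.pt_ne_C (hxE))) (G.hc0) (G.ptm x)) 
        (G.vne G.hC G.hB (Ne.symm (G.hBC)) (G.hc0) (G.hb0)) 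
        (G.vne G.hC (G.ptp x) (Ne.symm (G.pt_ne_C (hxE))) (G.hc0) (hym)) 
        (G.vne G.hC G.hB (Ne.symm (G.hBC)) (G.hc0) (G.hb1)) 
        (G.vne G.hC (G.ptp x) (Ne.symm (G.pt_ne_C (hxE))) (G.hc0) (hzm)) 
        (G.vne G.hA (G.ptp x) (Ne.symm (G.pt_ne_A (hxE))) (G.ha1) (G.ptm x)) 
        (G.vne G.hA G.hB (G.hAB) (G.ha1) (G.hb0)) 
        (G.vne G.hA (G.ptp x) (Ne.symm (G.pt_ne_A (hxE))) (G.ha1) (hym)) 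
        (G.vne G.hA G.hB (G.hAB) (G.ha1) (G.hb1)) 
        (G.vne G.hA (G.ptp x) (Ne.symm (G.pt_ne_A (hxE))) (G.ha1) (hzm)) 
        (G.vne (G.ptp x) G.hB (G.pt_ne_B (hxE)) (G.ptm x) (G.hb0)) (nxy) 
        (G.vne (G.ptp x) G.hB (G.pt_ne_B (hxE)) (G.ptm x) (G.hb1)) (nxz) 
        (G.vne G.hB (G.ptp x) (Ne.symm (G.pt_ne_B (hxE))) (G.hb0) (hym)) (G.hbb) 
        (G.vne G.hB (G.ptp x) (Ne.symm (G.pt_ne_B (hxE))) (G.hb0) (hzm)) 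
        (G.vne (G.ptp x) G.hB (G.pt_ne_B (hxE)) (hym) (G.hb1)) (nyz) 
        (G.vne G.hB (G.ptp x) (Ne.symm (G.pt_ne_B (hxE))) (G.hb1) (hzm))⟩
    · have hXArb : Lk c (pt G.P x) G.A G.rb :=
        G.lk_rb (G.ptp x) G.hA (G.pt_ne_A hxE) hXA
      exact ⟨G.rb, cyc8 G.a0 x G.a1 y G.c0 G.b0 G.c1 z (hXArb.e' (G.ptm x) G.ha0) 
        (hXArb.e (G.ptm x) G.ha1) (hXArb.e' hym G.ha1) (hxC.e hym G.hc0) (hLBC.e' G.hb0 G.hc0) 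
        (hLBC.e G.hb0 G.hc1) (hxC.e' hzm G.hc1) (hXArb.e hzm G.ha0) 
        (G.vne G.hA (G.ptp x) (Ne.symm (G.pt_ne_A (hxE))) (G.ha0) (G.ptm x)) (G.haa) 
        (G.vne G.hA (G.ptp x) (Ne.symm (G.pt_ne_A (hxE))) (G.ha0) (hym)) 
        (G.vne G.hA G.hC (G.hAC) (G.ha0) (G.hc0)) (G.vne G.hA G.hB (G.hAB) (G.ha0) (G.hb0)) 
        (G.vne G.hA G.hC (G.hAC) (G.ha0) (G.hc1)) 
        (G.vne G.hA (G.ptp x) (Ne.symm (G.pt_ne_A (hxE))) (G.ha0) (hzm)) 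
        (G.vne (G.ptp x) G.hA (G.pt_ne_A (hxE)) (G.ptm x) (G.ha1)) (nxy) 
        (G.vne (G.ptp x) G.hC (G.pt_ne_C (hxE)) (G.ptm x) (G.hc0)) 
        (G.vne (G.ptp x) G.hB (G.pt_ne_B (hxE)) (G.ptm x) (G.hb0)) 
        (G.vne (G.ptp x) G.hC (G.pt_ne_C (hxE)) (G.ptm x) (G.hc1)) (nxz) 
        (G.vne G.hA (G.ptp x) (Ne.symm (G.pt_ne_A (hxE))) (G.ha1) (hym)) 
        (G.vne G.hA G.hC (G.hAC) (G.ha1) (G.hc0)) (G.vne G.hA G.hB (G.hAB) (G.ha1) (G.hb0)) 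
        (G.vne G.hA G.hC (G.hAC) (G.ha1) (G.hc1)) 
        (G.vne G.hA (G.ptp x) (Ne.symm (G.pt_ne_A (hxE))) (G.ha1) (hzm)) 
        (G.vne (G.ptp x) G.hC (G.pt_ne_C (hxE)) (hym) (G.hc0)) 
        (G.vne (G.ptp x) G.hB (G.pt_ne_B (hxE)) (hym) (G.hb0)) 
        (G.vne (G.ptp x) G.hC (G.pt_ne_C (hxE)) (hym) (G.hc1)) (nyz) 
        (G.vne G.hC G.hB (Ne.symm (G.hBC)) (G.hc0) (G.hb0)) (G.hcc) 
        (G.vne G.hC (G.ptp x) (Ne.symm (G.pt_ne_C (hxE))) (G.hc0) (hzm)) 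
        (G.vne G.hB G.hC (G.hBC) (G.hb0) (G.hc1)) 
        (G.vne G.hB (G.ptp x) (Ne.symm (G.pt_ne_B (hxE))) (G.hb0) (hzm)) 
        (G.vne G.hC (G.ptp x) (Ne.symm (G.pt_ne_C (hxE))) (G.hc1) (hzm))⟩
  by_cases hw2 : ∃ x ∈ G.Ext \ Sv, ∃ y ∈ G.Ext \ Sv, x ≠ y ∧ pt G.P y = pt G.P x
  · obtain ⟨x, hx, x2, hx2, nxx2, hx2x⟩ := hw2
    have hxE := hRBE x hx
    have hx2m : x2 ∈ pt G.P x := hx2x ▸ G.ptm x2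
    have hxB : Lk c (pt G.P x) G.B G.r := hRB x hx
    have hXsub : pt G.P x ⊆ G.Ext := by
      intro w hw
      have hpw : pt G.P w = pt G.P x := pt_eq (G.ptp x) hw
      refine G.hpart w (fun hwA => ?_) (fun hwB => ?_) (fun hwC => ?_)
      · exact G.pt_ne_A hxE (by rw [← hpw]; exact pt_eq G.hA hwA)
      · exact G.pt_ne_B hxE (by rw [← hpw]; exact pt_eq G.hB hwB)
      · exact G.pt_ne_C hxE (by rw [← hpw]; exact pt_eq G.hC hwC)
    have hXsub2 : pt G.P x ⊆ G.Ext \ Sv := by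
      intro w hw
      refine Finset.mem_sdiff.mpr ⟨hXsub hw, fun hwS => ?_⟩
      have hpw : pt G.P w = pt G.P x := pt_eq (G.ptp x) hw
      have hlk := hSvB w hwS
      rw [hpw] at hlk
      exact hRBnS x hx (Finset.mem_filter.mpr ⟨hxE, hlk⟩)
    have hXcard : (pt G.P x).card ≤ 2 := by
      by_contra hbig
      obtain ⟨u, v, w, hu, hv, hw, nuv, nuw, nvw⟩ :=
        pick3 (show 3 ≤ (pt G.P x).card by omega)
      exact hw3 ⟨u, hXsub2 hu, v, hXsub2 hv, w, hXsub2 hw, nuv, nuw, nvw,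
        (pt_eq (G.ptp x) hv).trans (pt_eq (G.ptp x) hu).symm,
        (pt_eq (G.ptp x) hw).trans (pt_eq (G.ptp x) hu).symm⟩
    have hEx3 : 3 ≤ (G.Ext \ pt G.P x).card := by
      have h1 := Finset.card_sdiff_of_subset hXsub
      have := G.hext; omega
    by_cases hy : ∃ y ∈ G.Ext, y ∉ pt G.P x ∧ Lk c (pt G.P x) (pt G.P y) G.r
    · obtain ⟨y, hyE, hynx, hlk⟩ := hy
      have hPyx : pt G.P y ≠ pt G.P x := fun h => hynx (h ▸ G.ptm y)
      exact ⟨G.r, cyc8 G.c0 G.a0 G.b0 x y x2 G.b1 G.a1 (hLAC.e' G.ha0 G.hc0) 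
        (hLAB.e G.ha0 G.hb0) (hxB.e' (G.ptm x) G.hb0) (hlk.e (G.ptm x) (G.ptm y)) 
        (hlk.e' hx2m (G.ptm y)) (hxB.e hx2m G.hb1) (hLAB.e' G.ha1 G.hb1) (hLAC.e G.ha1 G.hc0) 
        (G.vne G.hC G.hA (Ne.symm (G.hAC)) (G.hc0) (G.ha0)) 
        (G.vne G.hC G.hB (Ne.symm (G.hBC)) (G.hc0) (G.hb0)) 
        (G.vne G.hC (G.ptp x) (Ne.symm (G.pt_ne_C (hxE))) (G.hc0) (G.ptm x)) 
        (G.vne G.hC (G.ptp y) (Ne.symm (G.pt_ne_C (hyE))) (G.hc0) (G.ptm y)) 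
        (G.vne G.hC (G.ptp x) (Ne.symm (G.pt_ne_C (hxE))) (G.hc0) (hx2m)) 
        (G.vne G.hC G.hB (Ne.symm (G.hBC)) (G.hc0) (G.hb1)) 
        (G.vne G.hC G.hA (Ne.symm (G.hAC)) (G.hc0) (G.ha1)) 
        (G.vne G.hA G.hB (G.hAB) (G.ha0) (G.hb0)) 
        (G.vne G.hA (G.ptp x) (Ne.symm (G.pt_ne_A (hxE))) (G.ha0) (G.ptm x)) 
        (G.vne G.hA (G.ptp y) (Ne.symm (G.pt_ne_A (hyE))) (G.ha0) (G.ptm y)) 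
        (G.vne G.hA (G.ptp x) (Ne.symm (G.pt_ne_A (hxE))) (G.ha0) (hx2m)) 
        (G.vne G.hA G.hB (G.hAB) (G.ha0) (G.hb1)) (G.haa) 
        (G.vne G.hB (G.ptp x) (Ne.symm (G.pt_ne_B (hxE))) (G.hb0) (G.ptm x)) 
        (G.vne G.hB (G.ptp y) (Ne.symm (G.pt_ne_B (hyE))) (G.hb0) (G.ptm y)) 
        (G.vne G.hB (G.ptp x) (Ne.symm (G.pt_ne_B (hxE))) (G.hb0) (hx2m)) (G.hbb) 
        (G.vne G.hB G.hA (Ne.symm (G.hAB)) (G.hb0) (G.ha1)) 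
        (fun h => hynx (by rw [← h]; exact G.ptm x)) (nxx2) 
        (G.vne (G.ptp x) G.hB (G.pt_ne_B (hxE)) (G.ptm x) (G.hb1)) 
        (G.vne (G.ptp x) G.hA (G.pt_ne_A (hxE)) (G.ptm x) (G.ha1)) 
        (G.vne (G.ptp y) (G.ptp x) hPyx (G.ptm y) hx2m) 
        (G.vne (G.ptp y) G.hB (G.pt_ne_B (hyE)) (G.ptm y) (G.hb1)) 
        (G.vne (G.ptp y) G.hA (G.pt_ne_A (hyE)) (G.ptm y) (G.ha1)) 
        (G.vne (G.ptp x) G.hB (G.pt_ne_B (hxE)) (hx2m) (G.hb1)) 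
        (G.vne (G.ptp x) G.hA (G.pt_ne_A (hxE)) (hx2m) (G.ha1)) 
        (G.vne G.hB G.hA (Ne.symm (G.hAB)) (G.hb1) (G.ha1))⟩
    · have hrbX : ∀ y' ∈ G.Ext \ pt G.P x, Lk c (pt G.P x) (pt G.P y') G.rb := by
        intro y' hy'
        obtain ⟨hy'E, hy'n⟩ := Finset.mem_sdiff.mp hy'
        have hPne : pt G.P y' ≠ pt G.P x := fun h => hy'n (h ▸ G.ptm y')
        exact G.lk_rb (G.ptp x) (G.ptp y') hPne.symm (fun hr => hy ⟨y', hy'E, hy'n, hr⟩)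
      obtain ⟨y1, y2, y3, hy1, hy2, hy3, q12, q13, q23⟩ := pick3 hEx3
      have hy1E := (Finset.mem_sdiff.mp hy1).1
      have hy2E := (Finset.mem_sdiff.mp hy2).1
      have hy3E := (Finset.mem_sdiff.mp hy3).1
      have hy1n := (Finset.mem_sdiff.mp hy1).2
      have hy2n := (Finset.mem_sdiff.mp hy2).2
      have hy3n := (Finset.mem_sdiff.mp hy3).2
      exact ⟨G.rb, cyc8 G.c0 G.b0 G.c1 y1 x y2 x2 y3 (hLBC.e' G.hb0 G.hc0) (hLBC.e G.hb0 G.hc1) 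
        ((hallC y1 hy1E).e' (G.ptm y1) G.hc1) ((hrbX y1 hy1).e' (G.ptm x) (G.ptm y1)) 
        ((hrbX y2 hy2).e (G.ptm x) (G.ptm y2)) ((hrbX y2 hy2).e' hx2m (G.ptm y2)) 
        ((hrbX y3 hy3).e hx2m (G.ptm y3)) ((hallC y3 hy3E).e (G.ptm y3) G.hc0) 
        (G.vne G.hC G.hB (Ne.symm (G.hBC)) (G.hc0) (G.hb0)) (G.hcc) 
        (G.vne G.hC (G.ptp y1) (Ne.symm (G.pt_ne_C (hy1E))) (G.hc0) (G.ptm y1)) 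
        (G.vne G.hC (G.ptp x) (Ne.symm (G.pt_ne_C (hxE))) (G.hc0) (G.ptm x)) 
        (G.vne G.hC (G.ptp y2) (Ne.symm (G.pt_ne_C (hy2E))) (G.hc0) (G.ptm y2)) 
        (G.vne G.hC (G.ptp x) (Ne.symm (G.pt_ne_C (hxE))) (G.hc0) (hx2m)) 
        (G.vne G.hC (G.ptp y3) (Ne.symm (G.pt_ne_C (hy3E))) (G.hc0) (G.ptm y3)) 
        (G.vne G.hB G.hC (G.hBC) (G.hb0) (G.hc1)) 
        (G.vne G.hB (G.ptp y1) (Ne.symm (G.pt_ne_B (hy1E))) (G.hb0) (G.ptm y1)) 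
        (G.vne G.hB (G.ptp x) (Ne.symm (G.pt_ne_B (hxE))) (G.hb0) (G.ptm x)) 
        (G.vne G.hB (G.ptp y2) (Ne.symm (G.pt_ne_B (hy2E))) (G.hb0) (G.ptm y2)) 
        (G.vne G.hB (G.ptp x) (Ne.symm (G.pt_ne_B (hxE))) (G.hb0) (hx2m)) 
        (G.vne G.hB (G.ptp y3) (Ne.symm (G.pt_ne_B (hy3E))) (G.hb0) (G.ptm y3)) 
        (G.vne G.hC (G.ptp y1) (Ne.symm (G.pt_ne_C (hy1E))) (G.hc1) (G.ptm y1)) 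
        (G.vne G.hC (G.ptp x) (Ne.symm (G.pt_ne_C (hxE))) (G.hc1) (G.ptm x)) 
        (G.vne G.hC (G.ptp y2) (Ne.symm (G.pt_ne_C (hy2E))) (G.hc1) (G.ptm y2)) 
        (G.vne G.hC (G.ptp x) (Ne.symm (G.pt_ne_C (hxE))) (G.hc1) (hx2m)) 
        (G.vne G.hC (G.ptp y3) (Ne.symm (G.pt_ne_C (hy3E))) (G.hc1) (G.ptm y3)) 
        (fun h => hy1n (by rw [h]; exact G.ptm x)) (q12) 
        (fun h => hy1n (by rw [h]; exact hx2m)) (q13) 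
        (Ne.symm ((fun h => hy2n (by rw [h]; exact G.ptm x)) : y2 ≠ x)) (nxx2) 
        (Ne.symm ((fun h => hy3n (by rw [h]; exact G.ptm x)) : y3 ≠ x)) 
        (fun h => hy2n (by rw [h]; exact hx2m)) (q23) 
        (Ne.symm ((fun h => hy3n (by rw [h]; exact hx2m)) : y3 ≠ x2))⟩
  -- beta region: all parts of Ext \ Sv are singletons within Ext \ Sv
  have hinj : ∀ u ∈ G.Ext \ Sv, ∀ v ∈ G.Ext \ Sv, u ≠ v → pt G.P u ≠ pt G.P v := by
    intro u hu v hv huv h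
    exact hw2 ⟨u, hu, v, hv, huv, h.symm⟩
  by_cases hR1 : ∃ u ∈ G.Ext \ Sv, ∃ v ∈ G.Ext \ Sv, ∃ t ∈ G.Ext \ Sv,
      u ≠ v ∧ u ≠ t ∧ v ≠ t ∧ Lk c (pt G.P u) (pt G.P v) G.r ∧ Lk c (pt G.P v) (pt G.P t) G.r
  · obtain ⟨u, hu, v, hv, t, ht, nuv, nut, nvt, luv, lvt⟩ := hR1
    have huE := hRBE u hu; have hvE := hRBE v hv; have htE := hRBE t ht
    exact ⟨G.r, cyc8 G.a0 G.c0 G.a1 G.b0 u v t G.b1 (hLAC.e G.ha0 G.hc0) (hLAC.e' G.ha1 G.hc0) 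
      (hLAB.e G.ha1 G.hb0) ((hRB u hu).e' (G.ptm u) G.hb0) (luv.e (G.ptm u) (G.ptm v)) 
      (lvt.e (G.ptm v) (G.ptm t)) ((hRB t ht).e (G.ptm t) G.hb1) (hLAB.e' G.ha0 G.hb1) 
      (G.vne G.hA G.hC (G.hAC) (G.ha0) (G.hc0)) (G.haa) 
      (G.vne G.hA G.hB (G.hAB) (G.ha0) (G.hb0)) 
      (G.vne G.hA (G.ptp u) (Ne.symm (G.pt_ne_A (huE))) (G.ha0) (G.ptm u)) 
      (G.vne G.hA (G.ptp v) (Ne.symm (G.pt_ne_A (hvE))) (G.ha0) (G.ptm v)) 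
      (G.vne G.hA (G.ptp t) (Ne.symm (G.pt_ne_A (htE))) (G.ha0) (G.ptm t)) 
      (G.vne G.hA G.hB (G.hAB) (G.ha0) (G.hb1)) 
      (G.vne G.hC G.hA (Ne.symm (G.hAC)) (G.hc0) (G.ha1)) 
      (G.vne G.hC G.hB (Ne.symm (G.hBC)) (G.hc0) (G.hb0)) 
      (G.vne G.hC (G.ptp u) (Ne.symm (G.pt_ne_C (huE))) (G.hc0) (G.ptm u)) 
      (G.vne G.hC (G.ptp v) (Ne.symm (G.pt_ne_C (hvE))) (G.hc0) (G.ptm v)) 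
      (G.vne G.hC (G.ptp t) (Ne.symm (G.pt_ne_C (htE))) (G.hc0) (G.ptm t)) 
      (G.vne G.hC G.hB (Ne.symm (G.hBC)) (G.hc0) (G.hb1)) 
      (G.vne G.hA G.hB (G.hAB) (G.ha1) (G.hb0)) 
      (G.vne G.hA (G.ptp u) (Ne.symm (G.pt_ne_A (huE))) (G.ha1) (G.ptm u)) 
      (G.vne G.hA (G.ptp v) (Ne.symm (G.pt_ne_A (hvE))) (G.ha1) (G.ptm v)) 
      (G.vne G.hA (G.ptp t) (Ne.symm (G.pt_ne_A (htE))) (G.ha1) (G.ptm t)) 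
      (G.vne G.hA G.hB (G.hAB) (G.ha1) (G.hb1)) 
      (G.vne G.hB (G.ptp u) (Ne.symm (G.pt_ne_B (huE))) (G.hb0) (G.ptm u)) 
      (G.vne G.hB (G.ptp v) (Ne.symm (G.pt_ne_B (hvE))) (G.hb0) (G.ptm v)) 
      (G.vne G.hB (G.ptp t) (Ne.symm (G.pt_ne_B (htE))) (G.hb0) (G.ptm t)) (G.hbb) (nuv) (nut) 
      (G.vne (G.ptp u) G.hB (G.pt_ne_B (huE)) (G.ptm u) (G.hb1)) (nvt) 
      (G.vne (G.ptp v) G.hB (G.pt_ne_B (hvE)) (G.ptm v) (G.hb1)) 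
      (G.vne (G.ptp t) G.hB (G.pt_ne_B (htE)) (G.ptm t) (G.hb1))⟩
  by_cases hR3 : ∃ u ∈ G.Ext \ Sv, ∃ t ∈ G.Ext \ Sv,
      u ≠ t ∧ Lk c (pt G.P u) G.A G.r ∧ Lk c (pt G.P t) G.A G.r
  · obtain ⟨u, hu, t, ht, nut, luA, ltA⟩ := hR3
    obtain ⟨v, hv, nvu, nvt⟩ := third hRBcard u t
    have huE := hRBE u hu; have hvE := hRBE v hv; have htE := hRBE t ht
    exact ⟨G.r, cyc8 G.a0 G.c0 G.a1 u G.b0 v G.b1 t (hLAC.e G.ha0 G.hc0) (hLAC.e' G.ha1 G.hc0) 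
      (luA.e' (G.ptm u) G.ha1) ((hRB u hu).e (G.ptm u) G.hb0) ((hRB v hv).e' (G.ptm v) G.hb0) 
      ((hRB v hv).e (G.ptm v) G.hb1) ((hRB t ht).e' (G.ptm t) G.hb1) (ltA.e (G.ptm t) G.ha0) 
      (G.vne G.hA G.hC (G.hAC) (G.ha0) (G.hc0)) (G.haa) 
      (G.vne G.hA (G.ptp u) (Ne.symm (G.pt_ne_A (huE))) (G.ha0) (G.ptm u)) 
      (G.vne G.hA G.hB (G.hAB) (G.ha0) (G.hb0)) 
      (G.vne G.hA (G.ptp v) (Ne.symm (G.pt_ne_A (hvE))) (G.ha0) (G.ptm v)) 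
      (G.vne G.hA G.hB (G.hAB) (G.ha0) (G.hb1)) 
      (G.vne G.hA (G.ptp t) (Ne.symm (G.pt_ne_A (htE))) (G.ha0) (G.ptm t)) 
      (G.vne G.hC G.hA (Ne.symm (G.hAC)) (G.hc0) (G.ha1)) 
      (G.vne G.hC (G.ptp u) (Ne.symm (G.pt_ne_C (huE))) (G.hc0) (G.ptm u)) 
      (G.vne G.hC G.hB (Ne.symm (G.hBC)) (G.hc0) (G.hb0)) 
      (G.vne G.hC (G.ptp v) (Ne.symm (G.pt_ne_C (hvE))) (G.hc0) (G.ptm v)) 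
      (G.vne G.hC G.hB (Ne.symm (G.hBC)) (G.hc0) (G.hb1)) 
      (G.vne G.hC (G.ptp t) (Ne.symm (G.pt_ne_C (htE))) (G.hc0) (G.ptm t)) 
      (G.vne G.hA (G.ptp u) (Ne.symm (G.pt_ne_A (huE))) (G.ha1) (G.ptm u)) 
      (G.vne G.hA G.hB (G.hAB) (G.ha1) (G.hb0)) 
      (G.vne G.hA (G.ptp v) (Ne.symm (G.pt_ne_A (hvE))) (G.ha1) (G.ptm v)) 
      (G.vne G.hA G.hB (G.hAB) (G.ha1) (G.hb1)) 
      (G.vne G.hA (G.ptp t) (Ne.symm (G.pt_ne_A (htE))) (G.ha1) (G.ptm t)) 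
      (G.vne (G.ptp u) G.hB (G.pt_ne_B (huE)) (G.ptm u) (G.hb0)) (nvu.symm) 
      (G.vne (G.ptp u) G.hB (G.pt_ne_B (huE)) (G.ptm u) (G.hb1)) (nut) 
      (G.vne G.hB (G.ptp v) (Ne.symm (G.pt_ne_B (hvE))) (G.hb0) (G.ptm v)) (G.hbb) 
      (G.vne G.hB (G.ptp t) (Ne.symm (G.pt_ne_B (htE))) (G.hb0) (G.ptm t)) 
      (G.vne (G.ptp v) G.hB (G.pt_ne_B (hvE)) (G.ptm v) (G.hb1)) (nvt) 
      (G.vne G.hB (G.ptp t) (Ne.symm (G.pt_ne_B (htE))) (G.hb1) (G.ptm t))⟩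
  -- trio helper
  have htrio : ∀ x ∈ G.Ext \ Sv, ∀ y ∈ G.Ext \ Sv, ∀ z ∈ G.Ext \ Sv,
      x ≠ y → x ≠ z → y ≠ z →
      ∃ u v t, (u = x ∨ u = y ∨ u = z) ∧ (v = x ∨ v = y ∨ v = z) ∧ (t = x ∨ t = y ∨ t = z) ∧
        u ≠ v ∧ u ≠ t ∧ v ≠ t ∧ u ∈ G.Ext \ Sv ∧ v ∈ G.Ext \ Sv ∧ t ∈ G.Ext \ Sv ∧
        Lk c (pt G.P u) (pt G.P v) G.rb ∧ Lk c (pt G.P v) (pt G.P t) G.rb := by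
    intro x hx y hy z hz nxy nxz nyz
    by_cases hxy : Lk c (pt G.P x) (pt G.P y) G.r
    · by_cases hyz : Lk c (pt G.P y) (pt G.P z) G.r
      · exact absurd ⟨x, hx, y, hy, z, hz, nxy, nxz, nyz, hxy, hyz⟩ hR1
      · by_cases hxz : Lk c (pt G.P x) (pt G.P z) G.r
        · exact absurd ⟨y, hy, x, hx, z, hz, nxy.symm, nyz, nxz, hxy.symm, hxz⟩ hR1
        · exact ⟨x, z, y, Or.inl rfl, Or.inr (Or.inr rfl), Or.inr (Or.inl rfl),
            nxz, nxy, nyz.symm, hx, hz, hy,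
            G.lk_rb (G.ptp x) (G.ptp z) (hinj x hx z hz nxz) hxz,
            G.lk_rb (G.ptp z) (G.ptp y) (hinj z hz y hy nyz.symm) (fun h => hyz h.symm)⟩
    · by_cases hyz : Lk c (pt G.P y) (pt G.P z) G.r
      · by_cases hxz : Lk c (pt G.P x) (pt G.P z) G.r
        · exact absurd ⟨y, hy, z, hz, x, hx, nyz, nxy.symm, nxz.symm, hyz, hxz.symm⟩ hR1
        · exact ⟨y, x, z, Or.inr (Or.inl rfl), Or.inl rfl, Or.inr (Or.inr rfl),
            nxy.symm, nyz, nxz, hy, hx, hz,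
            G.lk_rb (G.ptp y) (G.ptp x) (hinj y hy x hx nxy.symm) (fun h => hxy h.symm),
            G.lk_rb (G.ptp x) (G.ptp z) (hinj x hx z hz nxz) hxz⟩
      · exact ⟨x, y, z, Or.inl rfl, Or.inr (Or.inl rfl), Or.inr (Or.inr rfl),
          nxy, nxz, nyz, hx, hy, hz,
          G.lk_rb (G.ptp x) (G.ptp y) (hinj x hx y hy nxy) hxy,
          G.lk_rb (G.ptp y) (G.ptp z) (hinj y hy z hz nyz) hyz⟩
  by_cases hS : 0 < Sv.card
  · obtain ⟨s, hsS⟩ := Finset.card_pos.mp hS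
    have hsE := hSvE s hsS
    obtain ⟨x, y, z, hx, hy, hz, nxy, nxz, nyz⟩ := pick3 hRBcard
    obtain ⟨u, v, t, _, _, _, nuv, nut, nvt, hu, hv, ht, luv, lvt⟩ :=
      htrio x hx y hy z hz nxy nxz nyz
    have huE := hRBE u hu; have hvE := hRBE v hv; have htE := hRBE t ht
    exact ⟨G.rb, cyc8 G.c0 u v t G.c1 G.b0 s G.b1 ((hallC u huE).e' (G.ptm u) G.hc0) 
      (luv.e (G.ptm u) (G.ptm v)) (lvt.e (G.ptm v) (G.ptm t)) ((hallC t htE).e (G.ptm t) G.hc1) 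
      (hLBC.e' G.hb0 G.hc1) ((hSvB s hsS).e' (G.ptm s) G.hb0) ((hSvB s hsS).e (G.ptm s) G.hb1) 
      (hLBC.e G.hb1 G.hc0) (G.vne G.hC (G.ptp u) (Ne.symm (G.pt_ne_C (huE))) (G.hc0) (G.ptm u)) 
      (G.vne G.hC (G.ptp v) (Ne.symm (G.pt_ne_C (hvE))) (G.hc0) (G.ptm v)) 
      (G.vne G.hC (G.ptp t) (Ne.symm (G.pt_ne_C (htE))) (G.hc0) (G.ptm t)) (G.hcc) 
      (G.vne G.hC G.hB (Ne.symm (G.hBC)) (G.hc0) (G.hb0)) 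
      (G.vne G.hC (G.ptp s) (Ne.symm (G.pt_ne_C (hsE))) (G.hc0) (G.ptm s)) 
      (G.vne G.hC G.hB (Ne.symm (G.hBC)) (G.hc0) (G.hb1)) (nuv) (nut) 
      (G.vne (G.ptp u) G.hC (G.pt_ne_C (huE)) (G.ptm u) (G.hc1)) 
      (G.vne (G.ptp u) G.hB (G.pt_ne_B (huE)) (G.ptm u) (G.hb0)) 
      (fun h => hRBnS u hu (by rw [h]; exact hsS)) 
      (G.vne (G.ptp u) G.hB (G.pt_ne_B (huE)) (G.ptm u) (G.hb1)) (nvt) 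
      (G.vne (G.ptp v) G.hC (G.pt_ne_C (hvE)) (G.ptm v) (G.hc1)) 
      (G.vne (G.ptp v) G.hB (G.pt_ne_B (hvE)) (G.ptm v) (G.hb0)) 
      (fun h => hRBnS v hv (by rw [h]; exact hsS)) 
      (G.vne (G.ptp v) G.hB (G.pt_ne_B (hvE)) (G.ptm v) (G.hb1)) 
      (G.vne (G.ptp t) G.hC (G.pt_ne_C (htE)) (G.ptm t) (G.hc1)) 
      (G.vne (G.ptp t) G.hB (G.pt_ne_B (htE)) (G.ptm t) (G.hb0)) 
      (fun h => hRBnS t ht (by rw [h]; exact hsS)) 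
      (G.vne (G.ptp t) G.hB (G.pt_ne_B (htE)) (G.ptm t) (G.hb1)) 
      (G.vne G.hC G.hB (Ne.symm (G.hBC)) (G.hc1) (G.hb0)) 
      (G.vne G.hC (G.ptp s) (Ne.symm (G.pt_ne_C (hsE))) (G.hc1) (G.ptm s)) 
      (G.vne G.hC G.hB (Ne.symm (G.hBC)) (G.hc1) (G.hb1)) 
      (G.vne G.hB (G.ptp s) (Ne.symm (G.pt_ne_B (hsE))) (G.hb0) (G.ptm s)) (G.hbb) 
      (G.vne (G.ptp s) G.hB (G.pt_ne_B (hsE)) (G.ptm s) (G.hb1))⟩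
  · -- Sv empty
    have h5 : 5 ≤ (G.Ext \ Sv).card := by have := G.hext; omega
    obtain ⟨u1, u2, u3, u4, u5, hu1, hu2, hu3, hu4, hu5,
      n12, n13, n14, n15, n23, n24, n25, n34, n35, n45⟩ := pick5 h5
    by_cases hA4 : Lk c (pt G.P u4) G.A G.r
    · by_cases hA5 : Lk c (pt G.P u5) G.A G.r
      · exact absurd ⟨u4, hu4, u5, hu5, n45, hA4, hA5⟩ hR3
      have hApp1 : Lk c (pt G.P u1) G.A G.rb :=
        G.lk_rb (G.ptp u1) G.hA (G.pt_ne_A (hRBE u1 hu1)) (fun h => hR3 ⟨u1, hu1, u4, hu4, n14, h, hA4⟩)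
      have hApp2 : Lk c (pt G.P u5) G.A G.rb :=
        G.lk_rb (G.ptp u5) G.hA (G.pt_ne_A (hRBE u5 hu5)) (hA5)
      obtain ⟨u, v, t, ou, ov, ot, nuv, nut, nvt, hu, hv, ht, luv, lvt⟩ :=
        htrio u2 hu2 u3 hu3 u4 hu4 n23 n24 n34
      have huE := hRBE u hu; have hvE := hRBE v hv; have htE := hRBE t ht
      have qu1 : u ≠ u1 := by rcases ou with h | h | h <;> subst h <;> first | exact n12.symm | exact n13.symm | exact n14.symm
      have qu5 : u ≠ u5 := by rcases ou with h | h | h <;> subst h <;> first | exact n25 | exact n35 | exact n45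
      have qv1 : v ≠ u1 := by rcases ov with h | h | h <;> subst h <;> first | exact n12.symm | exact n13.symm | exact n14.symm
      have qv5 : v ≠ u5 := by rcases ov with h | h | h <;> subst h <;> first | exact n25 | exact n35 | exact n45
      have qt1 : t ≠ u1 := by rcases ot with h | h | h <;> subst h <;> first | exact n12.symm | exact n13.symm | exact n14.symm
      have qt5 : t ≠ u5 := by rcases ot with h | h | h <;> subst h <;> first | exact n25 | exact n35 | exact n45
      exact ⟨G.rb, cyc8 G.c0 u v t G.c1 u1 G.a0 u5 ((hallC u huE).e' (G.ptm u) G.hc0) 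
        (luv.e (G.ptm u) (G.ptm v)) (lvt.e (G.ptm v) (G.ptm t)) 
        ((hallC t htE).e (G.ptm t) G.hc1) ((hallC u1 (hRBE u1 hu1)).e' (G.ptm u1) G.hc1) 
        (hApp1.e (G.ptm u1) G.ha0) (hApp2.e' (G.ptm u5) G.ha0) 
        ((hallC u5 (hRBE u5 hu5)).e (G.ptm u5) G.hc0) 
        (G.vne G.hC (G.ptp u) (Ne.symm (G.pt_ne_C (huE))) (G.hc0) (G.ptm u)) 
        (G.vne G.hC (G.ptp v) (Ne.symm (G.pt_ne_C (hvE))) (G.hc0) (G.ptm v)) 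
        (G.vne G.hC (G.ptp t) (Ne.symm (G.pt_ne_C (htE))) (G.hc0) (G.ptm t)) (G.hcc) 
        (G.vne G.hC (G.ptp u1) (Ne.symm (G.pt_ne_C (hRBE u1 hu1))) (G.hc0) (G.ptm u1)) 
        (G.vne G.hC G.hA (Ne.symm (G.hAC)) (G.hc0) (G.ha0)) 
        (G.vne G.hC (G.ptp u5) (Ne.symm (G.pt_ne_C (hRBE u5 hu5))) (G.hc0) (G.ptm u5)) (nuv) 
        (nut) (G.vne (G.ptp u) G.hC (G.pt_ne_C (huE)) (G.ptm u) (G.hc1)) (qu1) 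
        (G.vne (G.ptp u) G.hA (G.pt_ne_A (huE)) (G.ptm u) (G.ha0)) (qu5) (nvt) 
        (G.vne (G.ptp v) G.hC (G.pt_ne_C (hvE)) (G.ptm v) (G.hc1)) (qv1) 
        (G.vne (G.ptp v) G.hA (G.pt_ne_A (hvE)) (G.ptm v) (G.ha0)) (qv5) 
        (G.vne (G.ptp t) G.hC (G.pt_ne_C (htE)) (G.ptm t) (G.hc1)) (qt1) 
        (G.vne (G.ptp t) G.hA (G.pt_ne_A (htE)) (G.ptm t) (G.ha0)) (qt5) 
        (G.vne G.hC (G.ptp u1) (Ne.symm (G.pt_ne_C (hRBE u1 hu1))) (G.hc1) (G.ptm u1)) 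
        (G.vne G.hC G.hA (Ne.symm (G.hAC)) (G.hc1) (G.ha0)) 
        (G.vne G.hC (G.ptp u5) (Ne.symm (G.pt_ne_C (hRBE u5 hu5))) (G.hc1) (G.ptm u5)) 
        (G.vne (G.ptp u1) G.hA (G.pt_ne_A (hRBE u1 hu1)) (G.ptm u1) (G.ha0)) (n15) 
        (G.vne G.hA (G.ptp u5) (Ne.symm (G.pt_ne_A (hRBE u5 hu5))) (G.ha0) (G.ptm u5))⟩
    · by_cases hA5 : Lk c (pt G.P u5) G.A G.r
      have hApp1 : Lk c (pt G.P u1) G.A G.rb :=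
        G.lk_rb (G.ptp u1) G.hA (G.pt_ne_A (hRBE u1 hu1)) (fun h => hR3 ⟨u1, hu1, u5, hu5, n15, h, hA5⟩)
      have hApp2 : Lk c (pt G.P u4) G.A G.rb :=
        G.lk_rb (G.ptp u4) G.hA (G.pt_ne_A (hRBE u4 hu4)) (hA4)
      obtain ⟨u, v, t, ou, ov, ot, nuv, nut, nvt, hu, hv, ht, luv, lvt⟩ :=
        htrio u2 hu2 u3 hu3 u5 hu5 n23 n25 n35
      have huE := hRBE u hu; have hvE := hRBE v hv; have htE := hRBE t ht
      have qu1 : u ≠ u1 := by rcases ou with h | h | h <;> subst h <;> first | exact n12.symm | exact n13.symm | exact n15.symm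
      have qu4 : u ≠ u4 := by rcases ou with h | h | h <;> subst h <;> first | exact n24 | exact n34 | exact n45.symm
      have qv1 : v ≠ u1 := by rcases ov with h | h | h <;> subst h <;> first | exact n12.symm | exact n13.symm | exact n15.symm
      have qv4 : v ≠ u4 := by rcases ov with h | h | h <;> subst h <;> first | exact n24 | exact n34 | exact n45.symm
      have qt1 : t ≠ u1 := by rcases ot with h | h | h <;> subst h <;> first | exact n12.symm | exact n13.symm | exact n15.symm
      have qt4 : t ≠ u4 := by rcases ot with h | h | h <;> subst h <;> first | exact n24 | exact n34 | exact n45.symm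
      exact ⟨G.rb, cyc8 G.c0 u v t G.c1 u1 G.a0 u4 ((hallC u huE).e' (G.ptm u) G.hc0) 
        (luv.e (G.ptm u) (G.ptm v)) (lvt.e (G.ptm v) (G.ptm t)) 
        ((hallC t htE).e (G.ptm t) G.hc1) ((hallC u1 (hRBE u1 hu1)).e' (G.ptm u1) G.hc1) 
        (hApp1.e (G.ptm u1) G.ha0) (hApp2.e' (G.ptm u4) G.ha0) 
        ((hallC u4 (hRBE u4 hu4)).e (G.ptm u4) G.hc0) 
        (G.vne G.hC (G.ptp u) (Ne.symm (G.pt_ne_C (huE))) (G.hc0) (G.ptm u)) 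
        (G.vne G.hC (G.ptp v) (Ne.symm (G.pt_ne_C (hvE))) (G.hc0) (G.ptm v)) 
        (G.vne G.hC (G.ptp t) (Ne.symm (G.pt_ne_C (htE))) (G.hc0) (G.ptm t)) (G.hcc) 
        (G.vne G.hC (G.ptp u1) (Ne.symm (G.pt_ne_C (hRBE u1 hu1))) (G.hc0) (G.ptm u1)) 
        (G.vne G.hC G.hA (Ne.symm (G.hAC)) (G.hc0) (G.ha0)) 
        (G.vne G.hC (G.ptp u4) (Ne.symm (G.pt_ne_C (hRBE u4 hu4))) (G.hc0) (G.ptm u4)) (nuv) 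
        (nut) (G.vne (G.ptp u) G.hC (G.pt_ne_C (huE)) (G.ptm u) (G.hc1)) (qu1) 
        (G.vne (G.ptp u) G.hA (G.pt_ne_A (huE)) (G.ptm u) (G.ha0)) (qu4) (nvt) 
        (G.vne (G.ptp v) G.hC (G.pt_ne_C (hvE)) (G.ptm v) (G.hc1)) (qv1) 
        (G.vne (G.ptp v) G.hA (G.pt_ne_A (hvE)) (G.ptm v) (G.ha0)) (qv4) 
        (G.vne (G.ptp t) G.hC (G.pt_ne_C (htE)) (G.ptm t) (G.hc1)) (qt1) 
        (G.vne (G.ptp t) G.hA (G.pt_ne_A (htE)) (G.ptm t) (G.ha0)) (qt4) 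
        (G.vne G.hC (G.ptp u1) (Ne.symm (G.pt_ne_C (hRBE u1 hu1))) (G.hc1) (G.ptm u1)) 
        (G.vne G.hC G.hA (Ne.symm (G.hAC)) (G.hc1) (G.ha0)) 
        (G.vne G.hC (G.ptp u4) (Ne.symm (G.pt_ne_C (hRBE u4 hu4))) (G.hc1) (G.ptm u4)) 
        (G.vne (G.ptp u1) G.hA (G.pt_ne_A (hRBE u1 hu1)) (G.ptm u1) (G.ha0)) (n14) 
        (G.vne G.hA (G.ptp u4) (Ne.symm (G.pt_ne_A (hRBE u4 hu4))) (G.ha0) (G.ptm u4))⟩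
      have hApp1 : Lk c (pt G.P u4) G.A G.rb :=
        G.lk_rb (G.ptp u4) G.hA (G.pt_ne_A (hRBE u4 hu4)) (hA4)
      have hApp2 : Lk c (pt G.P u5) G.A G.rb :=
        G.lk_rb (G.ptp u5) G.hA (G.pt_ne_A (hRBE u5 hu5)) (hA5)
      obtain ⟨u, v, t, ou, ov, ot, nuv, nut, nvt, hu, hv, ht, luv, lvt⟩ :=
        htrio u1 hu1 u2 hu2 u3 hu3 n12 n13 n23
      have huE := hRBE u hu; have hvE := hRBE v hv; have htE := hRBE t ht
      have qu4 : u ≠ u4 := by rcases ou with h | h | h <;> subst h <;> first | exact n14 | exact n24 | exact n34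
      have qu5 : u ≠ u5 := by rcases ou with h | h | h <;> subst h <;> first | exact n15 | exact n25 | exact n35
      have qv4 : v ≠ u4 := by rcases ov with h | h | h <;> subst h <;> first | exact n14 | exact n24 | exact n34
      have qv5 : v ≠ u5 := by rcases ov with h | h | h <;> subst h <;> first | exact n15 | exact n25 | exact n35
      have qt4 : t ≠ u4 := by rcases ot with h | h | h <;> subst h <;> first | exact n14 | exact n24 | exact n34
      have qt5 : t ≠ u5 := by rcases ot with h | h | h <;> subst h <;> first | exact n15 | exact n25 | exact n35
      exact ⟨G.rb, cyc8 G.c0 u v t G.c1 u4 G.a0 u5 ((hallC u huE).e' (G.ptm u) G.hc0) 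
        (luv.e (G.ptm u) (G.ptm v)) (lvt.e (G.ptm v) (G.ptm t)) 
        ((hallC t htE).e (G.ptm t) G.hc1) ((hallC u4 (hRBE u4 hu4)).e' (G.ptm u4) G.hc1) 
        (hApp1.e (G.ptm u4) G.ha0) (hApp2.e' (G.ptm u5) G.ha0) 
        ((hallC u5 (hRBE u5 hu5)).e (G.ptm u5) G.hc0) 
        (G.vne G.hC (G.ptp u) (Ne.symm (G.pt_ne_C (huE))) (G.hc0) (G.ptm u)) 
        (G.vne G.hC (G.ptp v) (Ne.symm (G.pt_ne_C (hvE))) (G.hc0) (G.ptm v)) 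
        (G.vne G.hC (G.ptp t) (Ne.symm (G.pt_ne_C (htE))) (G.hc0) (G.ptm t)) (G.hcc) 
        (G.vne G.hC (G.ptp u4) (Ne.symm (G.pt_ne_C (hRBE u4 hu4))) (G.hc0) (G.ptm u4)) 
        (G.vne G.hC G.hA (Ne.symm (G.hAC)) (G.hc0) (G.ha0)) 
        (G.vne G.hC (G.ptp u5) (Ne.symm (G.pt_ne_C (hRBE u5 hu5))) (G.hc0) (G.ptm u5)) (nuv) 
        (nut) (G.vne (G.ptp u) G.hC (G.pt_ne_C (huE)) (G.ptm u) (G.hc1)) (qu4) 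
        (G.vne (G.ptp u) G.hA (G.pt_ne_A (huE)) (G.ptm u) (G.ha0)) (qu5) (nvt) 
        (G.vne (G.ptp v) G.hC (G.pt_ne_C (hvE)) (G.ptm v) (G.hc1)) (qv4) 
        (G.vne (G.ptp v) G.hA (G.pt_ne_A (hvE)) (G.ptm v) (G.ha0)) (qv5) 
        (G.vne (G.ptp t) G.hC (G.pt_ne_C (htE)) (G.ptm t) (G.hc1)) (qt4) 
        (G.vne (G.ptp t) G.hA (G.pt_ne_A (htE)) (G.ptm t) (G.ha0)) (qt5) 
        (G.vne G.hC (G.ptp u4) (Ne.symm (G.pt_ne_C (hRBE u4 hu4))) (G.hc1) (G.ptm u4)) 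
        (G.vne G.hC G.hA (Ne.symm (G.hAC)) (G.hc1) (G.ha0)) 
        (G.vne G.hC (G.ptp u5) (Ne.symm (G.pt_ne_C (hRBE u5 hu5))) (G.hc1) (G.ptm u5)) 
        (G.vne (G.ptp u4) G.hA (G.pt_ne_A (hRBE u4 hu4)) (G.ptm u4) (G.ha0)) (n45) 
        (G.vne G.hA (G.ptp u5) (Ne.symm (G.pt_ne_A (hRBE u5 hu5))) (G.ha0) (G.ptm u5))⟩
lemma Ctx.case2 {n k : ℕ} {c : Sym2 (Fin n) → Fin k} (G : Ctx n k c)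
    (hLAB : Lk c G.A G.B G.r) (hLAC : Lk c G.A G.C G.r) (hLBC : Lk c G.B G.C G.rb) :
    ∃ j : Fin k, hasMonoCycle c 8 j := by
  classical
  by_cases h2a : ∃ x ∈ G.Ext, ∃ y ∈ G.Ext, x ≠ y ∧
      Lk c (pt G.P x) G.B G.r ∧ Lk c (pt G.P y) G.C G.r
  · obtain ⟨x, hxE, y, hyE, nxy, hxB, hyC⟩ := h2a
    exact ⟨G.r, cyc8 x G.b0 G.a0 G.c0 y G.c1 G.a1 G.b1 (hxB.e (G.ptm x) G.hb0) 
      (hLAB.e' G.ha0 G.hb0) (hLAC.e G.ha0 G.hc0) (hyC.e' (G.ptm y) G.hc0) 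
      (hyC.e (G.ptm y) G.hc1) (hLAC.e' G.ha1 G.hc1) (hLAB.e G.ha1 G.hb1) 
      (hxB.e' (G.ptm x) G.hb1) (G.vne (G.ptp x) G.hB (G.pt_ne_B (hxE)) (G.ptm x) (G.hb0)) 
      (G.vne (G.ptp x) G.hA (G.pt_ne_A (hxE)) (G.ptm x) (G.ha0)) 
      (G.vne (G.ptp x) G.hC (G.pt_ne_C (hxE)) (G.ptm x) (G.hc0)) (nxy) 
      (G.vne (G.ptp x) G.hC (G.pt_ne_C (hxE)) (G.ptm x) (G.hc1)) 
      (G.vne (G.ptp x) G.hA (G.pt_ne_A (hxE)) (G.ptm x) (G.ha1)) 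
      (G.vne (G.ptp x) G.hB (G.pt_ne_B (hxE)) (G.ptm x) (G.hb1)) 
      (G.vne G.hB G.hA (Ne.symm (G.hAB)) (G.hb0) (G.ha0)) 
      (G.vne G.hB G.hC (G.hBC) (G.hb0) (G.hc0)) 
      (G.vne G.hB (G.ptp y) (Ne.symm (G.pt_ne_B (hyE))) (G.hb0) (G.ptm y)) 
      (G.vne G.hB G.hC (G.hBC) (G.hb0) (G.hc1)) 
      (G.vne G.hB G.hA (Ne.symm (G.hAB)) (G.hb0) (G.ha1)) (G.hbb) 
      (G.vne G.hA G.hC (G.hAC) (G.ha0) (G.hc0)) 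
      (G.vne G.hA (G.ptp y) (Ne.symm (G.pt_ne_A (hyE))) (G.ha0) (G.ptm y)) 
      (G.vne G.hA G.hC (G.hAC) (G.ha0) (G.hc1)) (G.haa) 
      (G.vne G.hA G.hB (G.hAB) (G.ha0) (G.hb1)) 
      (G.vne G.hC (G.ptp y) (Ne.symm (G.pt_ne_C (hyE))) (G.hc0) (G.ptm y)) (G.hcc) 
      (G.vne G.hC G.hA (Ne.symm (G.hAC)) (G.hc0) (G.ha1)) 
      (G.vne G.hC G.hB (Ne.symm (G.hBC)) (G.hc0) (G.hb1)) 
      (G.vne (G.ptp y) G.hC (G.pt_ne_C (hyE)) (G.ptm y) (G.hc1)) 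
      (G.vne (G.ptp y) G.hA (G.pt_ne_A (hyE)) (G.ptm y) (G.ha1)) 
      (G.vne (G.ptp y) G.hB (G.pt_ne_B (hyE)) (G.ptm y) (G.hb1)) 
      (G.vne G.hC G.hA (Ne.symm (G.hAC)) (G.hc1) (G.ha1)) 
      (G.vne G.hC G.hB (Ne.symm (G.hBC)) (G.hc1) (G.hb1)) 
      (G.vne G.hA G.hB (G.hAB) (G.ha1) (G.hb1))⟩
  by_cases hbc : ∃ x ∈ G.Ext, Lk c (pt G.P x) G.B G.r ∧ Lk c (pt G.P x) G.C G.r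
  · obtain ⟨x, hxE, hxB, hxC⟩ := hbc
    by_cases hx2 : ∃ x2 ∈ G.Ext, x2 ≠ x ∧ pt G.P x2 = pt G.P x
    · obtain ⟨x2, hx2E, nx2x, hx2p⟩ := hx2
      have hx2m : x2 ∈ pt G.P x := hx2p ▸ G.ptm x2
      exact G.T2L G.r G.hB G.hC G.hA G.hBC (Ne.symm G.hAB) (Ne.symm G.hAC)
        G.hb0 G.hb1 G.hbb G.hc0 G.hc1 G.hcc G.ha0 G.ha1 G.haa nx2x.symm hx2m
        hxB hxC hLAB.symm hLAC (G.pt_ne_B hxE) (G.pt_ne_C hxE) (G.pt_ne_A hxE)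
    · have h4 : 4 ≤ (G.Ext \ pt G.P x).card := by
        have hic := Finset.card_inter_add_card_sdiff G.Ext (pt G.P x)
        have hile : (G.Ext ∩ pt G.P x).card ≤ 1 := by
          have hsub : (G.Ext ∩ pt G.P x) ⊆ {x} := by
            intro w hw
            obtain ⟨hwE, hwp⟩ := Finset.mem_inter.mp hw
            simp only [Finset.mem_singleton]
            by_contra hne
            exact hx2 ⟨w, hwE, hne, pt_eq (G.ptp x) hwp⟩
          calc (G.Ext ∩ pt G.P x).card ≤ ({x} : Finset (Fin n)).card := Finset.card_le_card hsub
            _ = 1 := Finset.card_singleton x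
        have := G.hext; omega
      obtain ⟨e1, e2, e3, e4, he1, he2, he3, he4, n12, n13, n14, n23, n24, n34⟩ := pick4 h4
      have hEi : ∀ w ∈ G.Ext \ pt G.P x, w ∈ G.Ext := fun w hw => (Finset.mem_sdiff.mp hw).1
      have hnx : ∀ w ∈ G.Ext \ pt G.P x, w ≠ x := by
        intro w hw h
        exact (Finset.mem_sdiff.mp hw).2 (by rw [h]; exact G.ptm x)
      have hBi : ∀ w ∈ G.Ext \ pt G.P x, Lk c (pt G.P w) G.B G.rb := by
        intro w hw
        refine G.lk_rb (G.ptp w) G.hB (G.pt_ne_B (hEi w hw)) (fun hr => ?_)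
        exact h2a ⟨w, hEi w hw, x, hxE, hnx w hw, hr, hxC⟩
      have hCi : ∀ w ∈ G.Ext \ pt G.P x, Lk c (pt G.P w) G.C G.rb := by
        intro w hw
        refine G.lk_rb (G.ptp w) G.hC (G.pt_ne_C (hEi w hw)) (fun hr => ?_)
        exact h2a ⟨x, hxE, w, hEi w hw, (hnx w hw).symm, hxB, hr⟩
      exact G.T10L G.rb G.hB G.hC G.hBC G.hb0 G.hb1 G.hbb G.hc0 G.hc1 G.hcc
        n12 n13 n14 n23 n24 n34
        (hBi e1 he1) (hBi e2 he2) (hBi e3 he3) (hBi e4 he4)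
        (hCi e1 he1) (hCi e2 he2) (hCi e3 he3) (hCi e4 he4)
        (G.pt_ne_B (hEi e1 he1)) (G.pt_ne_B (hEi e2 he2)) (G.pt_ne_B (hEi e3 he3))
        (G.pt_ne_B (hEi e4 he4)) (G.pt_ne_C (hEi e1 he1)) (G.pt_ne_C (hEi e2 he2))
        (G.pt_ne_C (hEi e3 he3)) (G.pt_ne_C (hEi e4 he4))
  · by_cases hb : ∃ x ∈ G.Ext, Lk c (pt G.P x) G.B G.r
    · obtain ⟨x0, hx0E, hx0B⟩ := hb
      have hallC : ∀ y ∈ G.Ext, Lk c (pt G.P y) G.C G.rb := by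
        intro y hyE
        refine G.lk_rb (G.ptp y) G.hC (G.pt_ne_C hyE) (fun hr => ?_)
        by_cases hxy : x0 = y
        · exact hbc ⟨x0, hx0E, hx0B, by rw [hxy]; exact hr⟩
        · exact h2a ⟨x0, hx0E, y, hyE, hxy, hx0B, hr⟩
      exact G.case2c hLAB hLAC hLBC hallC
    · have hallB : ∀ y ∈ G.Ext, Lk c (pt G.P y) G.B G.rb := fun y hyE =>
        G.lk_rb (G.ptp y) G.hB (G.pt_ne_B hyE) (fun hr => hb ⟨y, hyE, hr⟩)
      exact (G.swapBC).case2c hLAC hLAB hLBC.symm hallB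

lemma Ctx.case1 {n k : ℕ} {c : Sym2 (Fin n) → Fin k} (G : Ctx n k c)
    (hLAB : Lk c G.A G.B G.r) (hLAC : Lk c G.A G.C G.r) (hLBC : Lk c G.B G.C G.r) :
    ∃ j : Fin k, hasMonoCycle c 8 j := by
  classical
  by_cases h1a : ∃ x ∈ G.Ext, ∃ y ∈ G.Ext, x ≠ y ∧
      ((Lk c (pt G.P x) G.A G.r ∧ Lk c (pt G.P y) G.B G.r) ∨
       (Lk c (pt G.P x) G.A G.r ∧ Lk c (pt G.P y) G.C G.r) ∨
       (Lk c (pt G.P x) G.B G.r ∧ Lk c (pt G.P y) G.A G.r) ∨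
       (Lk c (pt G.P x) G.B G.r ∧ Lk c (pt G.P y) G.C G.r) ∨
       (Lk c (pt G.P x) G.C G.r ∧ Lk c (pt G.P y) G.A G.r) ∨
       (Lk c (pt G.P x) G.C G.r ∧ Lk c (pt G.P y) G.B G.r))
  · obtain ⟨x, hxE, y, hyE, nxy, hcase⟩ := h1a
    rcases hcase with ⟨h1, h2⟩ | ⟨h1, h2⟩ | ⟨h1, h2⟩ | ⟨h1, h2⟩ | ⟨h1, h2⟩ | ⟨h1, h2⟩
    · exact G.T3L G.r G.hA G.hB G.hC G.hAB G.hAC G.hBC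
        G.ha0 G.ha1 G.haa G.hb0 G.hb1 G.hbb G.hc0 G.hc1 G.hcc nxy h1 h2 (hLAC) (hLBC.symm)
        (G.pt_ne_A hxE) (G.pt_ne_B hxE) (G.pt_ne_C hxE) (G.pt_ne_A hyE) (G.pt_ne_B hyE) (G.pt_ne_C hyE)
    · exact G.T3L G.r G.hA G.hC G.hB G.hAC G.hAB (Ne.symm G.hBC)
        G.ha0 G.ha1 G.haa G.hc0 G.hc1 G.hcc G.hb0 G.hb1 G.hbb nxy h1 h2 (hLAB) (hLBC)
        (G.pt_ne_A hxE) (G.pt_ne_C hxE) (G.pt_ne_B hxE) (G.pt_ne_A hyE) (G.pt_ne_C hyE) (G.pt_ne_B hyE)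
    · exact G.T3L G.r G.hB G.hA G.hC (Ne.symm G.hAB) G.hBC G.hAC
        G.hb0 G.hb1 G.hbb G.ha0 G.ha1 G.haa G.hc0 G.hc1 G.hcc nxy h1 h2 (hLBC) (hLAC.symm)
        (G.pt_ne_B hxE) (G.pt_ne_A hxE) (G.pt_ne_C hxE) (G.pt_ne_B hyE) (G.pt_ne_A hyE) (G.pt_ne_C hyE)
    · exact G.T3L G.r G.hB G.hC G.hA G.hBC (Ne.symm G.hAB) (Ne.symm G.hAC)
        G.hb0 G.hb1 G.hbb G.hc0 G.hc1 G.hcc G.ha0 G.ha1 G.haa nxy h1 h2 (hLAB.symm) (hLAC)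
        (G.pt_ne_B hxE) (G.pt_ne_C hxE) (G.pt_ne_A hxE) (G.pt_ne_B hyE) (G.pt_ne_C hyE) (G.pt_ne_A hyE)
    · exact G.T3L G.r G.hC G.hA G.hB (Ne.symm G.hAC) (Ne.symm G.hBC) G.hAB
        G.hc0 G.hc1 G.hcc G.ha0 G.ha1 G.haa G.hb0 G.hb1 G.hbb nxy h1 h2 (hLBC.symm) (hLAB.symm)
        (G.pt_ne_C hxE) (G.pt_ne_A hxE) (G.pt_ne_B hxE) (G.pt_ne_C hyE) (G.pt_ne_A hyE) (G.pt_ne_B hyE)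
    · exact G.T3L G.r G.hC G.hB G.hA (Ne.symm G.hBC) (Ne.symm G.hAC) (Ne.symm G.hAB)
        G.hc0 G.hc1 G.hcc G.hb0 G.hb1 G.hbb G.ha0 G.ha1 G.haa nxy h1 h2 (hLAC.symm) (hLAB)
        (G.pt_ne_C hxE) (G.pt_ne_B hxE) (G.pt_ne_A hxE) (G.pt_ne_C hyE) (G.pt_ne_B hyE) (G.pt_ne_A hyE)
  by_cases hx : ∃ x ∈ G.Ext,
      (Lk c (pt G.P x) G.A G.r ∨ Lk c (pt G.P x) G.B G.r ∨ Lk c (pt G.P x) G.C G.r)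
  · obtain ⟨x0, hx0E, hl⟩ := hx
    by_cases hx2 : ∃ y ∈ G.Ext, y ≠ x0 ∧
        (Lk c (pt G.P y) G.A G.r ∨ Lk c (pt G.P y) G.B G.r ∨ Lk c (pt G.P y) G.C G.r)
    · obtain ⟨y0, hy0E, ny0, hly⟩ := hx2
      have h4c : 4 ≤ G.Ext.card := by have := G.hext; omega
      rcases hl with hU | hU | hU <;> rcases hly with hV | hV | hV
      · have hQz : ∀ z ∈ G.Ext, Lk c (pt G.P z) G.B G.rb := by
          intro z hzE
          refine G.lk_rb (G.ptp z) G.hB (G.pt_ne_B hzE) (fun hr => ?_)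
          by_cases hzx : z = x0
          · exact h1a ⟨z, hzE, y0, hy0E, by rw [hzx]; exact ny0.symm, Or.inr (Or.inr (Or.inl ⟨hr, hV⟩))⟩
          · exact h1a ⟨x0, hx0E, z, hzE, fun h => hzx h.symm, Or.inl ⟨hU, hr⟩⟩
        have hRz : ∀ z ∈ G.Ext, Lk c (pt G.P z) G.C G.rb := by
          intro z hzE
          refine G.lk_rb (G.ptp z) G.hC (G.pt_ne_C hzE) (fun hr => ?_)
          by_cases hzx : z = x0
          · exact h1a ⟨z, hzE, y0, hy0E, by rw [hzx]; exact ny0.symm, Or.inr (Or.inr (Or.inr (Or.inr (Or.inl ⟨hr, hV⟩))))⟩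
          · exact h1a ⟨x0, hx0E, z, hzE, fun h => hzx h.symm, Or.inr (Or.inl ⟨hU, hr⟩)⟩
        obtain ⟨e1, e2, e3, e4, he1, he2, he3, he4, n12, n13, n14, n23, n24, n34⟩ := pick4 h4c
        have hEi : ∀ w ∈ G.Ext, w ∈ G.Ext := fun w hw => hw
        exact G.T10L G.rb G.hB G.hC G.hBC G.hb0 G.hb1 G.hbb G.hc0 G.hc1 G.hcc
          n12 n13 n14 n23 n24 n34
          (hQz e1 he1) (hQz e2 he2) (hQz e3 he3) (hQz e4 he4)
          (hRz e1 he1) (hRz e2 he2) (hRz e3 he3) (hRz e4 he4)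
          (G.pt_ne_B (hEi e1 he1)) (G.pt_ne_B (hEi e2 he2)) (G.pt_ne_B (hEi e3 he3)) (G.pt_ne_B (hEi e4 he4))
          (G.pt_ne_C (hEi e1 he1)) (G.pt_ne_C (hEi e2 he2)) (G.pt_ne_C (hEi e3 he3)) (G.pt_ne_C (hEi e4 he4))
      · exact absurd ⟨x0, hx0E, y0, hy0E, ny0.symm, Or.inl ⟨hU, hV⟩⟩ h1a
      · exact absurd ⟨x0, hx0E, y0, hy0E, ny0.symm, Or.inr (Or.inl ⟨hU, hV⟩)⟩ h1a
      · exact absurd ⟨x0, hx0E, y0, hy0E, ny0.symm, Or.inr (Or.inr (Or.inl ⟨hU, hV⟩))⟩ h1a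
      · have hQz : ∀ z ∈ G.Ext, Lk c (pt G.P z) G.A G.rb := by
          intro z hzE
          refine G.lk_rb (G.ptp z) G.hA (G.pt_ne_A hzE) (fun hr => ?_)
          by_cases hzx : z = x0
          · exact h1a ⟨z, hzE, y0, hy0E, by rw [hzx]; exact ny0.symm, Or.inl ⟨hr, hV⟩⟩
          · exact h1a ⟨x0, hx0E, z, hzE, fun h => hzx h.symm, Or.inr (Or.inr (Or.inl ⟨hU, hr⟩))⟩
        have hRz : ∀ z ∈ G.Ext, Lk c (pt G.P z) G.C G.rb := by
          intro z hzE
          refine G.lk_rb (G.ptp z) G.hC (G.pt_ne_C hzE) (fun hr => ?_)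
          by_cases hzx : z = x0
          · exact h1a ⟨z, hzE, y0, hy0E, by rw [hzx]; exact ny0.symm, Or.inr (Or.inr (Or.inr (Or.inr (Or.inr ⟨hr, hV⟩))))⟩
          · exact h1a ⟨x0, hx0E, z, hzE, fun h => hzx h.symm, Or.inr (Or.inr (Or.inr (Or.inl ⟨hU, hr⟩)))⟩
        obtain ⟨e1, e2, e3, e4, he1, he2, he3, he4, n12, n13, n14, n23, n24, n34⟩ := pick4 h4c
        have hEi : ∀ w ∈ G.Ext, w ∈ G.Ext := fun w hw => hw
        exact G.T10L G.rb G.hA G.hC G.hAC G.ha0 G.ha1 G.haa G.hc0 G.hc1 G.hcc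
          n12 n13 n14 n23 n24 n34
          (hQz e1 he1) (hQz e2 he2) (hQz e3 he3) (hQz e4 he4)
          (hRz e1 he1) (hRz e2 he2) (hRz e3 he3) (hRz e4 he4)
          (G.pt_ne_A (hEi e1 he1)) (G.pt_ne_A (hEi e2 he2)) (G.pt_ne_A (hEi e3 he3)) (G.pt_ne_A (hEi e4 he4))
          (G.pt_ne_C (hEi e1 he1)) (G.pt_ne_C (hEi e2 he2)) (G.pt_ne_C (hEi e3 he3)) (G.pt_ne_C (hEi e4 he4))
      · exact absurd ⟨x0, hx0E, y0, hy0E, ny0.symm, Or.inr (Or.inr (Or.inr (Or.inl ⟨hU, hV⟩)))⟩ h1a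
      · exact absurd ⟨x0, hx0E, y0, hy0E, ny0.symm, Or.inr (Or.inr (Or.inr (Or.inr (Or.inl ⟨hU, hV⟩))))⟩ h1a
      · exact absurd ⟨x0, hx0E, y0, hy0E, ny0.symm, Or.inr (Or.inr (Or.inr (Or.inr (Or.inr ⟨hU, hV⟩))))⟩ h1a
      · have hQz : ∀ z ∈ G.Ext, Lk c (pt G.P z) G.A G.rb := by
          intro z hzE
          refine G.lk_rb (G.ptp z) G.hA (G.pt_ne_A hzE) (fun hr => ?_)
          by_cases hzx : z = x0
          · exact h1a ⟨z, hzE, y0, hy0E, by rw [hzx]; exact ny0.symm, Or.inr (Or.inl ⟨hr, hV⟩)⟩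
          · exact h1a ⟨x0, hx0E, z, hzE, fun h => hzx h.symm, Or.inr (Or.inr (Or.inr (Or.inr (Or.inl ⟨hU, hr⟩))))⟩
        have hRz : ∀ z ∈ G.Ext, Lk c (pt G.P z) G.B G.rb := by
          intro z hzE
          refine G.lk_rb (G.ptp z) G.hB (G.pt_ne_B hzE) (fun hr => ?_)
          by_cases hzx : z = x0
          · exact h1a ⟨z, hzE, y0, hy0E, by rw [hzx]; exact ny0.symm, Or.inr (Or.inr (Or.inr (Or.inl ⟨hr, hV⟩)))⟩
          · exact h1a ⟨x0, hx0E, z, hzE, fun h => hzx h.symm, Or.inr (Or.inr (Or.inr (Or.inr (Or.inr ⟨hU, hr⟩))))⟩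
        obtain ⟨e1, e2, e3, e4, he1, he2, he3, he4, n12, n13, n14, n23, n24, n34⟩ := pick4 h4c
        have hEi : ∀ w ∈ G.Ext, w ∈ G.Ext := fun w hw => hw
        exact G.T10L G.rb G.hA G.hB G.hAB G.ha0 G.ha1 G.haa G.hb0 G.hb1 G.hbb
          n12 n13 n14 n23 n24 n34
          (hQz e1 he1) (hQz e2 he2) (hQz e3 he3) (hQz e4 he4)
          (hRz e1 he1) (hRz e2 he2) (hRz e3 he3) (hRz e4 he4)
          (G.pt_ne_A (hEi e1 he1)) (G.pt_ne_A (hEi e2 he2)) (G.pt_ne_A (hEi e3 he3)) (G.pt_ne_A (hEi e4 he4))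
          (G.pt_ne_B (hEi e1 he1)) (G.pt_ne_B (hEi e2 he2)) (G.pt_ne_B (hEi e3 he3)) (G.pt_ne_B (hEi e4 he4))
    · by_cases h4 : 4 ≤ (G.Ext \ pt G.P x0).card
      · obtain ⟨e1, e2, e3, e4, he1, he2, he3, he4, n12, n13, n14, n23, n24, n34⟩ := pick4 h4
        have hEi : ∀ w ∈ G.Ext \ pt G.P x0, w ∈ G.Ext := fun w hw => (Finset.mem_sdiff.mp hw).1
        have hnx : ∀ w ∈ G.Ext \ pt G.P x0, w ≠ x0 := by
          intro w hw h
          exact (Finset.mem_sdiff.mp hw).2 (by rw [h]; exact G.ptm x0)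
        have hAz : ∀ w ∈ G.Ext \ pt G.P x0, Lk c (pt G.P w) G.A G.rb := fun w hw =>
          G.lk_rb (G.ptp w) G.hA (G.pt_ne_A (hEi w hw))
            (fun hr => hx2 ⟨w, hEi w hw, hnx w hw, Or.inl hr⟩)
        have hBz : ∀ w ∈ G.Ext \ pt G.P x0, Lk c (pt G.P w) G.B G.rb := fun w hw =>
          G.lk_rb (G.ptp w) G.hB (G.pt_ne_B (hEi w hw))
            (fun hr => hx2 ⟨w, hEi w hw, hnx w hw, Or.inr (Or.inl hr)⟩)
        exact G.T10L G.rb G.hA G.hB G.hAB G.ha0 G.ha1 G.haa G.hb0 G.hb1 G.hbb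
          n12 n13 n14 n23 n24 n34
          (hAz e1 he1) (hAz e2 he2) (hAz e3 he3) (hAz e4 he4)
          (hBz e1 he1) (hBz e2 he2) (hBz e3 he3) (hBz e4 he4)
          (G.pt_ne_A (hEi e1 he1)) (G.pt_ne_A (hEi e2 he2)) (G.pt_ne_A (hEi e3 he3)) (G.pt_ne_A (hEi e4 he4))
          (G.pt_ne_B (hEi e1 he1)) (G.pt_ne_B (hEi e2 he2)) (G.pt_ne_B (hEi e3 he3)) (G.pt_ne_B (hEi e4 he4))
      · have h2m : 2 ≤ (G.Ext ∩ pt G.P x0).card := by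
          have hic := Finset.card_inter_add_card_sdiff G.Ext (pt G.P x0)
          have := G.hext; omega
        obtain ⟨w1, w2, hw1, hw2, nw⟩ := pick2 h2m
        have hw1E := (Finset.mem_inter.mp hw1).1
        have hw1p := (Finset.mem_inter.mp hw1).2
        have hw2E := (Finset.mem_inter.mp hw2).1
        have hw2p := (Finset.mem_inter.mp hw2).2
        have hpe1 : pt G.P w1 = pt G.P x0 := pt_eq (G.ptp x0) hw1p
        have hw2m : w2 ∈ pt G.P w1 := by rw [hpe1]; exact hw2p
        have h4c : 4 ≤ G.Ext.card := by have := G.hext; omega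
        rcases hl with hU | hU | hU
        · by_cases hQ0 : Lk c (pt G.P x0) G.B G.r
          · exact G.T2L G.r G.hA G.hB G.hC G.hAB G.hAC G.hBC
              G.ha0 G.ha1 G.haa G.hb0 G.hb1 G.hbb G.hc0 G.hc1 G.hcc nw hw2m (hpe1.symm ▸ hU) (hpe1.symm ▸ hQ0) (hLAC) (hLBC.symm)
              (G.pt_ne_A hw1E) (G.pt_ne_B hw1E) (G.pt_ne_C hw1E)
          · by_cases hR0 : Lk c (pt G.P x0) G.C G.r
            · exact G.T2L G.r G.hA G.hC G.hB G.hAC G.hAB (Ne.symm G.hBC)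
                G.ha0 G.ha1 G.haa G.hc0 G.hc1 G.hcc G.hb0 G.hb1 G.hbb nw hw2m (hpe1.symm ▸ hU) (hpe1.symm ▸ hR0) (hLAB) (hLBC)
                (G.pt_ne_A hw1E) (G.pt_ne_C hw1E) (G.pt_ne_B hw1E)
            · have hQz : ∀ z ∈ G.Ext, Lk c (pt G.P z) G.B G.rb := by
                intro z hzE
                refine G.lk_rb (G.ptp z) G.hB (G.pt_ne_B hzE) (fun hr => ?_)
                by_cases hzp : z ∈ pt G.P x0
                · exact hQ0 (pt_eq (G.ptp x0) hzp ▸ hr)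
                · exact hx2 ⟨z, hzE, fun h => hzp (by rw [h]; exact G.ptm x0), Or.inr (Or.inl (hr))⟩
              have hRz : ∀ z ∈ G.Ext, Lk c (pt G.P z) G.C G.rb := by
                intro z hzE
                refine G.lk_rb (G.ptp z) G.hC (G.pt_ne_C hzE) (fun hr => ?_)
                by_cases hzp : z ∈ pt G.P x0
                · exact hR0 (pt_eq (G.ptp x0) hzp ▸ hr)
                · exact hx2 ⟨z, hzE, fun h => hzp (by rw [h]; exact G.ptm x0), Or.inr (Or.inr (hr))⟩
              obtain ⟨e1, e2, e3, e4, he1, he2, he3, he4, n12, n13, n14, n23, n24, n34⟩ := pick4 h4c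
              have hEi : ∀ w ∈ G.Ext, w ∈ G.Ext := fun w hw => hw
              exact G.T10L G.rb G.hB G.hC G.hBC G.hb0 G.hb1 G.hbb G.hc0 G.hc1 G.hcc
                n12 n13 n14 n23 n24 n34
                (hQz e1 he1) (hQz e2 he2) (hQz e3 he3) (hQz e4 he4)
                (hRz e1 he1) (hRz e2 he2) (hRz e3 he3) (hRz e4 he4)
                (G.pt_ne_B (hEi e1 he1)) (G.pt_ne_B (hEi e2 he2)) (G.pt_ne_B (hEi e3 he3)) (G.pt_ne_B (hEi e4 he4))
                (G.pt_ne_C (hEi e1 he1)) (G.pt_ne_C (hEi e2 he2)) (G.pt_ne_C (hEi e3 he3)) (G.pt_ne_C (hEi e4 he4))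
        · by_cases hQ0 : Lk c (pt G.P x0) G.A G.r
          · exact G.T2L G.r G.hB G.hA G.hC (Ne.symm G.hAB) G.hBC G.hAC
              G.hb0 G.hb1 G.hbb G.ha0 G.ha1 G.haa G.hc0 G.hc1 G.hcc nw hw2m (hpe1.symm ▸ hU) (hpe1.symm ▸ hQ0) (hLBC) (hLAC.symm)
              (G.pt_ne_B hw1E) (G.pt_ne_A hw1E) (G.pt_ne_C hw1E)
          · by_cases hR0 : Lk c (pt G.P x0) G.C G.r
            · exact G.T2L G.r G.hB G.hC G.hA G.hBC (Ne.symm G.hAB) (Ne.symm G.hAC)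
                G.hb0 G.hb1 G.hbb G.hc0 G.hc1 G.hcc G.ha0 G.ha1 G.haa nw hw2m (hpe1.symm ▸ hU) (hpe1.symm ▸ hR0) (hLAB.symm) (hLAC)
                (G.pt_ne_B hw1E) (G.pt_ne_C hw1E) (G.pt_ne_A hw1E)
            · have hQz : ∀ z ∈ G.Ext, Lk c (pt G.P z) G.A G.rb := by
                intro z hzE
                refine G.lk_rb (G.ptp z) G.hA (G.pt_ne_A hzE) (fun hr => ?_)
                by_cases hzp : z ∈ pt G.P x0
                · exact hQ0 (pt_eq (G.ptp x0) hzp ▸ hr)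
                · exact hx2 ⟨z, hzE, fun h => hzp (by rw [h]; exact G.ptm x0), Or.inl (hr)⟩
              have hRz : ∀ z ∈ G.Ext, Lk c (pt G.P z) G.C G.rb := by
                intro z hzE
                refine G.lk_rb (G.ptp z) G.hC (G.pt_ne_C hzE) (fun hr => ?_)
                by_cases hzp : z ∈ pt G.P x0
                · exact hR0 (pt_eq (G.ptp x0) hzp ▸ hr)
                · exact hx2 ⟨z, hzE, fun h => hzp (by rw [h]; exact G.ptm x0), Or.inr (Or.inr (hr))⟩
              obtain ⟨e1, e2, e3, e4, he1, he2, he3, he4, n12, n13, n14, n23, n24, n34⟩ := pick4 h4c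
              have hEi : ∀ w ∈ G.Ext, w ∈ G.Ext := fun w hw => hw
              exact G.T10L G.rb G.hA G.hC G.hAC G.ha0 G.ha1 G.haa G.hc0 G.hc1 G.hcc
                n12 n13 n14 n23 n24 n34
                (hQz e1 he1) (hQz e2 he2) (hQz e3 he3) (hQz e4 he4)
                (hRz e1 he1) (hRz e2 he2) (hRz e3 he3) (hRz e4 he4)
                (G.pt_ne_A (hEi e1 he1)) (G.pt_ne_A (hEi e2 he2)) (G.pt_ne_A (hEi e3 he3)) (G.pt_ne_A (hEi e4 he4))
                (G.pt_ne_C (hEi e1 he1)) (G.pt_ne_C (hEi e2 he2)) (G.pt_ne_C (hEi e3 he3)) (G.pt_ne_C (hEi e4 he4))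
        · by_cases hQ0 : Lk c (pt G.P x0) G.A G.r
          · exact G.T2L G.r G.hC G.hA G.hB (Ne.symm G.hAC) (Ne.symm G.hBC) G.hAB
              G.hc0 G.hc1 G.hcc G.ha0 G.ha1 G.haa G.hb0 G.hb1 G.hbb nw hw2m (hpe1.symm ▸ hU) (hpe1.symm ▸ hQ0) (hLBC.symm) (hLAB.symm)
              (G.pt_ne_C hw1E) (G.pt_ne_A hw1E) (G.pt_ne_B hw1E)
          · by_cases hR0 : Lk c (pt G.P x0) G.B G.r
            · exact G.T2L G.r G.hC G.hB G.hA (Ne.symm G.hBC) (Ne.symm G.hAC) (Ne.symm G.hAB)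
                G.hc0 G.hc1 G.hcc G.hb0 G.hb1 G.hbb G.ha0 G.ha1 G.haa nw hw2m (hpe1.symm ▸ hU) (hpe1.symm ▸ hR0) (hLAC.symm) (hLAB)
                (G.pt_ne_C hw1E) (G.pt_ne_B hw1E) (G.pt_ne_A hw1E)
            · have hQz : ∀ z ∈ G.Ext, Lk c (pt G.P z) G.A G.rb := by
                intro z hzE
                refine G.lk_rb (G.ptp z) G.hA (G.pt_ne_A hzE) (fun hr => ?_)
                by_cases hzp : z ∈ pt G.P x0
                · exact hQ0 (pt_eq (G.ptp x0) hzp ▸ hr)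
                · exact hx2 ⟨z, hzE, fun h => hzp (by rw [h]; exact G.ptm x0), Or.inl (hr)⟩
              have hRz : ∀ z ∈ G.Ext, Lk c (pt G.P z) G.B G.rb := by
                intro z hzE
                refine G.lk_rb (G.ptp z) G.hB (G.pt_ne_B hzE) (fun hr => ?_)
                by_cases hzp : z ∈ pt G.P x0
                · exact hR0 (pt_eq (G.ptp x0) hzp ▸ hr)
                · exact hx2 ⟨z, hzE, fun h => hzp (by rw [h]; exact G.ptm x0), Or.inr (Or.inl (hr))⟩
              obtain ⟨e1, e2, e3, e4, he1, he2, he3, he4, n12, n13, n14, n23, n24, n34⟩ := pick4 h4c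
              have hEi : ∀ w ∈ G.Ext, w ∈ G.Ext := fun w hw => hw
              exact G.T10L G.rb G.hA G.hB G.hAB G.ha0 G.ha1 G.haa G.hb0 G.hb1 G.hbb
                n12 n13 n14 n23 n24 n34
                (hQz e1 he1) (hQz e2 he2) (hQz e3 he3) (hQz e4 he4)
                (hRz e1 he1) (hRz e2 he2) (hRz e3 he3) (hRz e4 he4)
                (G.pt_ne_A (hEi e1 he1)) (G.pt_ne_A (hEi e2 he2)) (G.pt_ne_A (hEi e3 he3)) (G.pt_ne_A (hEi e4 he4))
                (G.pt_ne_B (hEi e1 he1)) (G.pt_ne_B (hEi e2 he2)) (G.pt_ne_B (hEi e3 he3)) (G.pt_ne_B (hEi e4 he4))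
  · have h4c : 4 ≤ G.Ext.card := by have := G.hext; omega
    have hAz : ∀ z ∈ G.Ext, Lk c (pt G.P z) G.A G.rb := fun z hz =>
      G.lk_rb (G.ptp z) G.hA (G.pt_ne_A hz) (fun hr => hx ⟨z, hz, Or.inl hr⟩)
    have hBz : ∀ z ∈ G.Ext, Lk c (pt G.P z) G.B G.rb := fun z hz =>
      G.lk_rb (G.ptp z) G.hB (G.pt_ne_B hz) (fun hr => hx ⟨z, hz, Or.inr (Or.inl hr)⟩)
    obtain ⟨e1, e2, e3, e4, he1, he2, he3, he4, n12, n13, n14, n23, n24, n34⟩ := pick4 h4c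
    have hEi : ∀ w ∈ G.Ext, w ∈ G.Ext := fun w hw => hw
    exact G.T10L G.rb G.hA G.hB G.hAB G.ha0 G.ha1 G.haa G.hb0 G.hb1 G.hbb
      n12 n13 n14 n23 n24 n34
      (hAz e1 he1) (hAz e2 he2) (hAz e3 he3) (hAz e4 he4)
      (hBz e1 he1) (hBz e2 he2) (hBz e3 he3) (hBz e4 he4)
      (G.pt_ne_A (hEi e1 he1)) (G.pt_ne_A (hEi e2 he2)) (G.pt_ne_A (hEi e3 he3)) (G.pt_ne_A (hEi e4 he4))
      (G.pt_ne_B (hEi e1 he1)) (G.pt_ne_B (hEi e2 he2)) (G.pt_ne_B (hEi e3 he3)) (G.pt_ne_B (hEi e4 he4))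
lemma Ctx.dispatch {n k : ℕ} {c : Sym2 (Fin n) → Fin k} (G : Ctx n k c)
    (hab : Lk c G.A G.B G.r) : ∃ j : Fin k, hasMonoCycle c 8 j := by
  classical
  by_cases hac : Lk c G.A G.C G.r
  · by_cases hbc : Lk c G.B G.C G.r
    · exact G.case1 hab hac hbc
    · exact G.case2 hab hac (G.lk_rb G.hB G.hC G.hBC hbc)
  · have hacrb := G.lk_rb G.hA G.hC G.hAC hac
    by_cases hbc : Lk c G.B G.C G.r
    · exact (G.permBAC).case2 hab.symm hbc hacrb
    · have hbcrb := G.lk_rb G.hB G.hC G.hBC hbc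
      exact (G.permCABflip).case2 hacrb.symm hbcrb.symm hab

/-- If `c` is a Gallai coloring of `K_n` with a Gallai partition all of whose parts have
order at most 3, with three parts each of order at least 2 and at least five further
vertices outside these three parts, then `c` contains a monochromatic `C₈`. -/
theorem mono_C8_of_three_parts_order_two (n k : ℕ)
    (c : Sym2 (Fin n) → Fin k) (hrb : ¬ hasRainbowTriangle c)
    (P : Finpartition (Finset.univ : Finset (Fin n))) (hP : IsGallaiPartition c P)
    (hsmall : ∀ A ∈ P.parts, A.card ≤ 3)
    (A B C : Finset (Fin n)) (hA : A ∈ P.parts) (hB : B ∈ P.parts) (hC : C ∈ P.parts)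
    (hAB : A ≠ B) (hAC : A ≠ C) (hBC : B ≠ C)
    (hA2 : 2 ≤ A.card) (hB2 : 2 ≤ B.card) (hC2 : 2 ≤ C.card)
    (hextra : A.card + B.card + C.card + 5 ≤ n) :
    ∃ j : Fin k, hasMonoCycle c 8 j := by
  classical
  obtain ⟨-, c1, c2, hor⟩ := hP
  obtain ⟨a0, a1, ha0, ha1, haa⟩ := pick2 hA2
  obtain ⟨b0, b1, hb0, hb1, hbb⟩ := pick2 hB2
  obtain ⟨u0, u1, hu0, hu1, huu⟩ := pick2 hC2
  set Ext := (Finset.univ : Finset (Fin n)) \ (A ∪ B ∪ C) with hExtdef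
  have hcu : (A ∪ B ∪ C).card ≤ A.card + B.card + C.card := by
    calc (A ∪ B ∪ C).card ≤ (A ∪ B).card + C.card := Finset.card_union_le _ _
      _ ≤ A.card + B.card + C.card := by
        have := Finset.card_union_le A B; omega
  have hextc : 5 ≤ Ext.card := by
    have h1 : Ext.card = (Finset.univ : Finset (Fin n)).card - (A ∪ B ∪ C).card := by
      rw [hExtdef]
      exact Finset.card_sdiff_of_subset (Finset.subset_univ _)
    have h2 : (Finset.univ : Finset (Fin n)).card = n := by
      rw [Finset.card_univ, Fintype.card_fin]
    omega
  have hEA : ∀ x ∈ Ext, x ∉ A := by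
    intro x hx hxa
    exact (Finset.mem_sdiff.mp hx).2 (Finset.mem_union_left _ (Finset.mem_union_left _ hxa))
  have hEB : ∀ x ∈ Ext, x ∉ B := by
    intro x hx hxb
    exact (Finset.mem_sdiff.mp hx).2 (Finset.mem_union_left _ (Finset.mem_union_right _ hxb))
  have hEC : ∀ x ∈ Ext, x ∉ C := by
    intro x hx hxc
    exact (Finset.mem_sdiff.mp hx).2 (Finset.mem_union_right _ hxc)
  have hpart : ∀ x : Fin n, x ∉ A → x ∉ B → x ∉ C → x ∈ Ext := by
    intro x h1 h2 h3
    refine Finset.mem_sdiff.mpr ⟨Finset.mem_univ x, fun hm => ?_⟩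
    rcases Finset.mem_union.mp hm with hm' | hm'
    · rcases Finset.mem_union.mp hm' with hm'' | hm''
      · exact h1 hm''
      · exact h2 hm''
    · exact h3 hm'
  by_cases hab : Lk c A B c1
  · exact Ctx.dispatch
      ⟨P, c1, c2, (fun X hX Y hY h => hor X hX Y hY h), Ext, hextc, A, B, C, hA, hB, hC,
        hAB, hAC, hBC, a0, a1, b0, b1, u0, u1, ha0, ha1, haa, hb0, hb1, hbb, hu0, hu1, huu,
        hpart, hEA, hEB, hEC⟩ hab
  · have hab2 : Lk c A B c2 := (hor A hA B hB hAB).resolve_left hab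
    exact Ctx.dispatch
      ⟨P, c2, c1, (fun X hX Y hY h => (hor X hX Y hY h).symm), Ext, hextc, A, B, C, hA, hB, hC,
        hAB, hAC, hBC, a0, a1, b0, b1, u0, u1, ha0, ha1, haa, hb0, hb1, hbb, hu0, hu1, huu,
        hpart, hEA, hEB, hEC⟩ hab2
end

section
/- Let G be an edge-coloring of K_n with no rainbow triangle, equipped with a Gallai partition. If the Gallai partition has at least five parts each of order at least 2, then G contains a monochromatic copy of C_8. -/
def mkM (b01 b02 b03 b04 b12 b13 b14 b23 b24 b34 : Bool) : Fin 5 → Fin 5 → Bool :=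
  ![![true, b01, b02, b03, b04],
    ![b01, true, b12, b13, b14],
    ![b02, b12, true, b23, b24],
    ![b03, b13, b23, true, b34],
    ![b04, b14, b24, b34, true]]

def checkC4 (M : Fin 5 → Fin 5 → Bool) : Bool :=
  (List.finRange 5).any fun w => (List.finRange 5).any fun x =>
    w != x && ((List.finRange 5).any fun y => y != w && y != x && (M w x == M x y) &&
      ((List.finRange 5).any fun z => z != w && z != x && z != y &&
        (M x y == M y z) && (M y z == M z w)))

def checkP5 (M : Fin 5 → Fin 5 → Bool) : Bool :=
  (List.finRange 5).any fun a => (List.finRange 5).any fun b =>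
    a != b && ((List.finRange 5).any fun d => d != a && d != b && (M a b == M b d) &&
      ((List.finRange 5).any fun e => e != a && e != b && e != d && (M b d == M d e) &&
        ((List.finRange 5).any fun f => f != a && f != b && f != d && f != e &&
          (M d e == M e f))))

set_option maxHeartbeats 16000000 in
theorem K5bool : ∀ b01 b02 b03 b04 b12 b13 b14 b23 b24 b34 : Bool,
    (checkC4 (mkM b01 b02 b03 b04 b12 b13 b14 b23 b24 b34) ||
     checkP5 (mkM b01 b02 b03 b04 b12 b13 b14 b23 b24 b34)) = true := by decide

lemma checkC4_spec {M : Fin 5 → Fin 5 → Bool} (h : checkC4 M = true) :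
    ∃ w x y z : Fin 5, w ≠ x ∧ y ≠ w ∧ y ≠ x ∧ z ≠ w ∧ z ≠ x ∧ z ≠ y ∧
      M w x = M x y ∧ M x y = M y z ∧ M y z = M z w := by
  simp only [checkC4, List.any_eq_true, List.mem_finRange, true_and, Bool.and_eq_true,
    bne_iff_ne, ne_eq, beq_iff_eq] at h
  obtain ⟨w, x, hwx, y, ⟨⟨hyw, hyx⟩, h1⟩, z, ⟨⟨⟨hzw, hzx⟩, hzy⟩, h2⟩, h3⟩ := h
  exact ⟨w, x, y, z, hwx, hyw, hyx, hzw, hzx, hzy, h1, h2, h3⟩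

lemma checkP5_spec {M : Fin 5 → Fin 5 → Bool} (h : checkP5 M = true) :
    ∃ a b d e f : Fin 5, a ≠ b ∧ d ≠ a ∧ d ≠ b ∧ e ≠ a ∧ e ≠ b ∧ e ≠ d ∧
      f ≠ a ∧ f ≠ b ∧ f ≠ d ∧ f ≠ e ∧
      M a b = M b d ∧ M b d = M d e ∧ M d e = M e f := by
  simp only [checkP5, List.any_eq_true, List.mem_finRange, true_and, Bool.and_eq_true,
    bne_iff_ne, ne_eq, beq_iff_eq] at h
  obtain ⟨a, b, hab, d, ⟨⟨hda, hdb⟩, h1⟩, e, ⟨⟨⟨hea, heb⟩, hed⟩, h2⟩, f,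
    ⟨⟨⟨⟨hfa, hfb⟩, hfd⟩, hfe⟩, h3⟩⟩ := h
  exact ⟨a, b, d, e, f, hab, hda, hdb, hea, heb, hed, hfa, hfb, hfd, hfe, h1, h2, h3⟩

lemma build {n k : ℕ} (c : Sym2 (Fin n) → Fin k) (A : Fin 5 → Finset (Fin n))
    (x1 x2 : Fin 5 → Fin n) (hx1 : ∀ i, x1 i ∈ A i) (hx2 : ∀ i, x2 i ∈ A i)
    (hx12 : ∀ i, x1 i ≠ x2 i)
    (hdisj : ∀ i j, i ≠ j → ∀ a, a ∈ A i → a ∈ A j → False)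
    (p : Fin 8 → Fin 5) (s : Fin 8 → Bool)
    (hps : ∀ m m', p m = p m' → s m = s m' → m = m')
    (j : Fin k)
    (hcol : ∀ i : Fin 8, ∀ a ∈ A (p i), ∀ b ∈ A (p ⟨(i.val + 1) % 8, by omega⟩),
      c s(a, b) = j) :
    hasMonoCycle c 8 j := by
  classical
  set v : Fin 8 → Fin n := fun m => if s m then x1 (p m) else x2 (p m) with hv
  have hvmem : ∀ m, v m ∈ A (p m) := by
    intro m
    by_cases h : s m <;> simp [hv, h, hx1, hx2]
  refine ⟨v, ?_, ?_⟩
  · intro m m' h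
    by_cases hp : p m = p m'
    · by_cases hs : s m = s m'
      · exact hps _ _ hp hs
      · exfalso
        cases hsm : s m <;> cases hsm' : s m' <;> simp [hsm, hsm'] at hs <;>
          simp [hv, hsm, hsm'] at h
        · exact hx12 (p m') (by rw [hp] at h; exact h.symm)
        · exact hx12 (p m') (by rw [hp] at h; exact h)
    · exact absurd (hvmem m') (fun hm' => hdisj _ _ hp (v m) (hvmem m) (h ▸ hm'))
  · intro i
    exact hcol i _ (hvmem i) _ (hvmem _)

/-- If `c` is a Gallai coloring of `K_n` with a Gallai partition having at least five
parts each of order at least 2, then `c` contains a monochromatic `C₈`. -/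
theorem mono_C8_of_five_parts_order_two (n k : ℕ)
    (c : Sym2 (Fin n) → Fin k) (hrb : ¬ hasRainbowTriangle c)
    (P : Finpartition (Finset.univ : Finset (Fin n))) (hP : IsGallaiPartition c P)
    (hbig : 5 ≤ (P.parts.filter (fun A => 2 ≤ A.card)).card) :
    ∃ j : Fin k, hasMonoCycle c 8 j := by
  classical
  obtain ⟨-, c1, c2, hG⟩ := hP
  obtain ⟨T, hTsub, hTcard⟩ := Finset.exists_subset_card_eq hbig
  have hTc : Fintype.card {x // x ∈ T} = 5 := by rw [Fintype.card_coe]; exact hTcard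
  let e := Fintype.equivFinOfCardEq hTc
  set A : Fin 5 → Finset (Fin n) := fun i => ((e.symm i : {x // x ∈ T}) : Finset (Fin n)) with hA
  have hAfil : ∀ i, A i ∈ P.parts.filter (fun A => 2 ≤ A.card) := fun i => hTsub (e.symm i).2
  have hAmem : ∀ i, A i ∈ P.parts := fun i => (Finset.mem_filter.mp (hAfil i)).1
  have hAcard : ∀ i, 2 ≤ (A i).card := fun i => (Finset.mem_filter.mp (hAfil i)).2
  have hAinj : Function.Injective A := fun i j h => e.symm.injective (Subtype.ext h)
  have hdisj : ∀ i j, i ≠ j → ∀ a, a ∈ A i → a ∈ A j → False := by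
    intro i j hij a hai haj
    have hne : A i ≠ A j := fun h => hij (hAinj h)
    have hd := P.disjoint (hAmem i) (hAmem j) hne
    exact Finset.disjoint_left.mp hd hai haj
  have hx : ∀ i, ∃ a ∈ A i, ∃ b ∈ A i, a ≠ b := fun i =>
    Finset.one_lt_card.mp (lt_of_lt_of_le one_lt_two (hAcard i))
  choose x1 hx1 x2 hx2 hx12 using hx
  set col : Fin 5 → Fin 5 → Fin k := fun i j => c s(x1 i, x1 j) with hcoldef
  have hcross : ∀ i j, i ≠ j → ∀ a ∈ A i, ∀ b ∈ A j, c s(a, b) = col i j := by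
    intro i j hij a ha b hb
    have hne : A i ≠ A j := fun h => hij (hAinj h)
    rcases hG (A i) (hAmem i) (A j) (hAmem j) hne with h | h
    · rw [h a ha b hb, hcoldef]; exact (h (x1 i) (hx1 i) (x1 j) (hx1 j)).symm
    · rw [h a ha b hb, hcoldef]; exact (h (x1 i) (hx1 i) (x1 j) (hx1 j)).symm
  have hmem12 : ∀ i j, i ≠ j → col i j = c1 ∨ col i j = c2 := by
    intro i j hij
    have hne : A i ≠ A j := fun h => hij (hAinj h)
    rcases hG (A i) (hAmem i) (A j) (hAmem j) hne with h | h
    · exact Or.inl (h (x1 i) (hx1 i) (x1 j) (hx1 j))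
    · exact Or.inr (h (x1 i) (hx1 i) (x1 j) (hx1 j))
  have hsymcol : ∀ i j, col i j = col j i := by
    intro i j; rw [hcoldef]; exact congrArg c Sym2.eq_swap
  set M : Fin 5 → Fin 5 → Bool := fun i j => col i j == c1 with hM
  have hMcol : ∀ i j i' j', i ≠ j → i' ≠ j' → M i j = M i' j' → col i j = col i' j' := by
    intro i j i' j' hij hij' hMe
    by_cases h1 : col i j = c1
    · have : M i j = true := by simp [hM, h1]
      have h2 : M i' j' = true := by rw [← hMe]; exact this
      have : col i' j' = c1 := by simpa [hM] using h2
      rw [h1, this]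
    · have : M i j = false := by simp [hM, h1]
      have h2 : M i' j' = false := by rw [← hMe]; exact this
      have h3 : ¬ col i' j' = c1 := by simpa [hM] using h2
      rcases hmem12 i j hij with h | h
      · exact absurd h h1
      · rcases hmem12 i' j' hij' with h' | h'
        · exact absurd h' h3
        · rw [h, h']
  have hMsym : ∀ i j, M i j = M j i := by intro i j; simp [hM, hsymcol i j]
  have hagree : ∀ i j : Fin 5, i ≠ j →
      mkM (M 0 1) (M 0 2) (M 0 3) (M 0 4) (M 1 2) (M 1 3) (M 1 4) (M 2 3) (M 2 4)
        (M 3 4) i j = M i j := by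
    intro i j hij
    fin_cases i <;> fin_cases j <;>
      first
        | exact absurd rfl hij
        | (simp [mkM]; try exact hMsym _ _)
  have hK := K5bool (M 0 1) (M 0 2) (M 0 3) (M 0 4) (M 1 2) (M 1 3) (M 1 4) (M 2 3)
    (M 2 4) (M 3 4)
  rw [Bool.or_eq_true] at hK
  rcases hK with hK | hK
  · obtain ⟨w, x, y, z, hwx, hyw, hyx, hzw, hzx, hzy, h1, h2, h3⟩ := checkC4_spec hK
    rw [hagree _ _ hwx, hagree _ _ (Ne.symm hyx)] at h1
    rw [hagree _ _ (Ne.symm hyx), hagree _ _ (Ne.symm hzy)] at h2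
    rw [hagree _ _ (Ne.symm hzy), hagree _ _ hzw] at h3
    have e1 : col x y = col w x := hMcol _ _ _ _ (Ne.symm hyx) hwx h1.symm
    have e2 : col y z = col w x := hMcol _ _ _ _ (Ne.symm hzy) hwx (h2.symm.trans h1.symm)
    have e3 : col z w = col w x :=
      hMcol _ _ _ _ hzw hwx (h3.symm.trans (h2.symm.trans h1.symm))
    have hadj : ∀ i : Fin 8, (![w,x,y,z,w,x,y,z] : Fin 8 → Fin 5) i ≠
        (![w,x,y,z,w,x,y,z] : Fin 8 → Fin 5) ⟨(i.val + 1) % 8, by omega⟩ := by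
      intro i
      fin_cases i <;>
        first | exact hwx | exact Ne.symm hyx | exact Ne.symm hzy | exact hzw
    have hcchain : ∀ i : Fin 8, col ((![w,x,y,z,w,x,y,z] : Fin 8 → Fin 5) i)
        ((![w,x,y,z,w,x,y,z] : Fin 8 → Fin 5) ⟨(i.val + 1) % 8, by omega⟩) = col w x := by
      intro i
      fin_cases i <;> first | rfl | exact e1 | exact e2 | exact e3
    refine ⟨col w x, build c A x1 x2 hx1 hx2 hx12 hdisj ![w,x,y,z,w,x,y,z]
      ![true,true,true,true,false,false,false,false] ?_ (col w x) ?_⟩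
    · intro m m' hpm hsm
      fin_cases m <;> fin_cases m' <;>
        first
          | rfl
          | exact absurd hsm (by decide)
          | exact absurd hpm hwx | exact absurd hpm (Ne.symm hwx)
          | exact absurd hpm hyw | exact absurd hpm (Ne.symm hyw)
          | exact absurd hpm hyx | exact absurd hpm (Ne.symm hyx)
          | exact absurd hpm hzw | exact absurd hpm (Ne.symm hzw)
          | exact absurd hpm hzx | exact absurd hpm (Ne.symm hzx)
          | exact absurd hpm hzy | exact absurd hpm (Ne.symm hzy)
    · intro i a ha b hb
      exact (hcross _ _ (hadj i) a ha b hb).trans (hcchain i)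
  · obtain ⟨va, vb, vd, ve, vf, hab, hda, hdb, hea, heb, hed, hfa, hfb, hfd, hfe,
      h1, h2, h3⟩ := checkP5_spec hK
    rw [hagree _ _ hab, hagree _ _ (Ne.symm hdb)] at h1
    rw [hagree _ _ (Ne.symm hdb), hagree _ _ (Ne.symm hed)] at h2
    rw [hagree _ _ (Ne.symm hed), hagree _ _ (Ne.symm hfe)] at h3
    have e1 : col vb vd = col va vb := hMcol _ _ _ _ (Ne.symm hdb) hab h1.symm
    have e2 : col vd ve = col va vb :=
      hMcol _ _ _ _ (Ne.symm hed) hab (h2.symm.trans h1.symm)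
    have e3 : col ve vf = col va vb :=
      hMcol _ _ _ _ (Ne.symm hfe) hab (h3.symm.trans (h2.symm.trans h1.symm))
    have hadj : ∀ i : Fin 8, (![va,vb,vd,ve,vf,ve,vd,vb] : Fin 8 → Fin 5) i ≠
        (![va,vb,vd,ve,vf,ve,vd,vb] : Fin 8 → Fin 5) ⟨(i.val + 1) % 8, by omega⟩ := by
      intro i
      fin_cases i <;>
        first
          | exact hab | exact Ne.symm hdb | exact Ne.symm hed | exact Ne.symm hfe
          | exact hfe | exact hed | exact hdb | exact Ne.symm hab
    have hcchain : ∀ i : Fin 8, col ((![va,vb,vd,ve,vf,ve,vd,vb] : Fin 8 → Fin 5) i)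
        ((![va,vb,vd,ve,vf,ve,vd,vb] : Fin 8 → Fin 5) ⟨(i.val + 1) % 8, by omega⟩)
        = col va vb := by
      intro i
      fin_cases i <;>
        first
          | rfl | exact e1 | exact e2 | exact e3
          | exact (hsymcol _ _).trans e3 | exact (hsymcol _ _).trans e2
          | exact (hsymcol _ _).trans e1 | exact hsymcol _ _
    refine ⟨col va vb, build c A x1 x2 hx1 hx2 hx12 hdisj ![va,vb,vd,ve,vf,ve,vd,vb]
      ![true,true,true,true,true,false,false,false] ?_ (col va vb) ?_⟩
    · intro m m' hpm hsm
      fin_cases m <;> fin_cases m' <;>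
        first
          | rfl
          | exact absurd hsm (by decide)
          | exact absurd hpm hab | exact absurd hpm (Ne.symm hab)
          | exact absurd hpm hda | exact absurd hpm (Ne.symm hda)
          | exact absurd hpm hdb | exact absurd hpm (Ne.symm hdb)
          | exact absurd hpm hea | exact absurd hpm (Ne.symm hea)
          | exact absurd hpm heb | exact absurd hpm (Ne.symm heb)
          | exact absurd hpm hed | exact absurd hpm (Ne.symm hed)
          | exact absurd hpm hfa | exact absurd hpm (Ne.symm hfa)
          | exact absurd hpm hfb | exact absurd hpm (Ne.symm hfb)
          | exact absurd hpm hfd | exact absurd hpm (Ne.symm hfd)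
          | exact absurd hpm hfe | exact absurd hpm (Ne.symm hfe)
    · intro i a ha b hb
      exact (hcross _ _ (hadj i) a ha b hb).trans (hcchain i)
end

section
/- For every integer k ≥ 1, gr_k(K_3 : P_7, P_3, ..., P_3) = 7, where P_7 is sought in color 1 and P_3 in each of the other k − 1 colors. That is, for every n ≥ 7, every edge-coloring of K_n with colors 1, ..., k contains either a rainbow triangle, or a path on 7 vertices monochromatic in color 1, or a path on 3 vertices monochromatic in some color j ≥ 2; and this fails for n = 6. -/
lemma matching_path {V : Type*} [DecidableEq V] (B : V → V → Prop)
    (hsym : ∀ a b, B a b → B b a)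
    (hirr : ∀ a, ¬ B a a)
    (hmatch : ∀ v u w, B v u → B v w → u = w) :
    ∀ S : Finset V,
      (S.card = 2 → ∃ a ∈ S, ∃ b ∈ S, a ≠ b ∧ ¬ B a b) →
      ∃ l : List V, l.Nodup ∧ l.toFinset = S ∧ l.Chain' (fun a b => ¬ B a b) := by
  classical
  intro S
  induction S using Finset.strongInduction with
  | _ S IH =>
  intro h2
  match hc : S.card with
  | 0 =>
    refine ⟨[], by simp, ?_, List.isChain_nil⟩
    simp [Finset.card_eq_zero.mp hc]
  | 1 =>
    obtain ⟨a, rfl⟩ := Finset.card_eq_one.mp hc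
    exact ⟨[a], by simp, by simp, List.isChain_singleton _⟩
  | 2 =>
    obtain ⟨a, ha, b, hb, hab, hBab⟩ := h2 hc
    refine ⟨[a, b], by simp [hab], ?_, by simp [List.Chain', hBab]⟩
    apply Finset.eq_of_subset_of_card_le
    · intro x hx
      have hx' : x = a ∨ x = b := by simpa using hx
      rcases hx' with rfl | rfl <;> assumption
    · rw [hc]; simp [hab]
  | (m + 3) =>
    by_cases hA : ∃ x ∈ S, ∀ u ∈ S, ¬ B x u
    · obtain ⟨x, hxS, hx⟩ := hA
      by_cases h3 : S.card = 3
      · -- S = {x, a, b}, path [a, x, b]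
        have hc2 : (S.erase x).card = 2 := by
          rw [Finset.card_erase_of_mem hxS, h3]
        obtain ⟨a, b, hab, hE⟩ := Finset.card_eq_two.mp hc2
        have haS : a ∈ S := Finset.mem_of_mem_erase (hE ▸ (by simp : a ∈ ({a,b} : Finset V)))
        have hbS : b ∈ S := Finset.mem_of_mem_erase (hE ▸ (by simp : b ∈ ({a,b} : Finset V)))
        have hax : a ≠ x := Finset.ne_of_mem_erase (hE ▸ (by simp : a ∈ ({a,b} : Finset V)))
        have hbx : b ≠ x := Finset.ne_of_mem_erase (hE ▸ (by simp : b ∈ ({a,b} : Finset V)))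
        refine ⟨[a, x, b], by simp [hax, hbx, hab, Ne.symm hbx, Ne.symm hax, Ne.symm hab], ?_, ?_⟩
        · have : S = insert x (S.erase x) := (Finset.insert_erase hxS).symm
          rw [this, hE]
          ext y; simp; tauto
        · simp only [List.Chain', List.isChain_cons_cons, List.isChain_singleton, and_true]
          exact ⟨fun h => hx a haS (hsym _ _ h), hx b hbS⟩
      · -- |S| ≥ 4 : peel x off the end
        set S' := S.erase x with hS'
        have hss : S' ⊂ S := Finset.erase_ssubset hxS
        have hc' : S'.card = S.card - 1 := Finset.card_erase_of_mem hxS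
        obtain ⟨l', hnd, htf, hch⟩ := IH S' hss (by intro h; omega)
        have hlen : l'.length = S'.card := by rw [← htf, List.toFinset_card_of_nodup hnd]
        refine ⟨l' ++ [x], ?_, ?_, ?_⟩
        · rw [List.nodup_append]
          refine ⟨hnd, by simp, ?_⟩
          intro y hy
          simp only [List.mem_singleton]
          rintro _ rfl rfl
          exact Finset.notMem_erase _ _ (htf ▸ List.mem_toFinset.mpr hy)
        · rw [List.toFinset_append, htf]
          simp only [List.toFinset_cons, List.toFinset_nil, insert_empty_eq]
          rw [Finset.union_comm, ← Finset.insert_eq, hS', Finset.insert_erase hxS]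
        · simp only [List.Chain']; rw [List.isChain_append]
          refine ⟨hch, by simp, ?_⟩
          intro y hy z hz
          simp only [List.head?_cons, Option.mem_def, Option.some.injEq] at hz
          subst hz
          have hyl : y ∈ l' := List.mem_of_mem_getLast? hy
          have hyS : y ∈ S := Finset.mem_of_mem_erase (htf ▸ List.mem_toFinset.mpr hyl)
          exact fun h => hx y hyS (hsym _ _ h)
    · -- every vertex matched within S
      push_neg at hA
      have hSne : S.Nonempty := Finset.card_pos.mp (by omega)
      obtain ⟨a, haS⟩ := hSne
      obtain ⟨b, hbS, hBab⟩ := hA a haS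
      have hab : a ≠ b := fun h => hirr a (h ▸ hBab)
      set S'' := (S.erase a).erase b with hS''
      have hbS' : b ∈ S.erase a := Finset.mem_erase.mpr ⟨fun h => hab h.symm, hbS⟩
      have hcc : S''.card = S.card - 2 := by
        rw [hS'', Finset.card_erase_of_mem hbS', Finset.card_erase_of_mem haS]; omega
      have hSeq : S = insert a (insert b S'') := by
        rw [hS'', Finset.insert_erase hbS', Finset.insert_erase haS]
      have hmemS'' : ∀ y ∈ S'', y ∈ S ∧ y ≠ a ∧ y ≠ b := by
        intro y hy
        rw [hS''] at hy
        exact ⟨Finset.mem_of_mem_erase (Finset.mem_of_mem_erase hy),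
          Finset.ne_of_mem_erase (Finset.mem_of_mem_erase hy), Finset.ne_of_mem_erase hy⟩
      have hBa : ∀ y, B a y → y = b := fun y h => hmatch a y b h hBab
      have hBb : ∀ y, B b y → y = a := fun y h => hmatch b y a h (hsym _ _ hBab)
      have hnot1 : S''.card ≠ 1 := by
        intro h1
        obtain ⟨z, hz⟩ := Finset.card_eq_one.mp h1
        have hzS'' : z ∈ S'' := hz ▸ Finset.mem_singleton_self z
        obtain ⟨hzS, hza, hzb⟩ := hmemS'' z hzS''
        obtain ⟨u, huS, hBzu⟩ := hA z hzS
        have huz : u ≠ z := fun h => hirr z (h ▸ hBzu)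
        have huSi : u ∈ insert a (insert b S'') := hSeq ▸ huS
        rcases Finset.mem_insert.mp huSi with hua | hu
        · rw [hua] at hBzu
          exact hzb (hBa z (hsym _ _ hBzu))
        rcases Finset.mem_insert.mp hu with hub | hu'
        · rw [hub] at hBzu
          exact hza (hBb z (hsym _ _ hBzu))
        · rw [hz] at hu'
          exact huz (Finset.mem_singleton.mp hu')
      have hge : 2 ≤ S''.card := by omega
      have hss'' : S'' ⊂ S := Finset.ssubset_of_subset_of_ssubset
        (Finset.erase_subset _ _) (Finset.erase_ssubset haS)
      by_cases hBspec : ∃ cc ∈ S'', ∃ d ∈ S'', cc ≠ d ∧ B cc d ∧ S''.card = 2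
      · obtain ⟨cc, hcS, d, hdS, hcd, hBcd, h2''⟩ := hBspec
        obtain ⟨hcS', hca, hcb⟩ := hmemS'' cc hcS
        obtain ⟨hdS', hda, hdb⟩ := hmemS'' d hdS
        have hE : S'' = {cc, d} := by
          apply (Finset.eq_of_subset_of_card_le ?_ ?_).symm
          · intro y hy
            have hy' : y = cc ∨ y = d := by simpa using hy
            rcases hy' with rfl | rfl <;> assumption
          · rw [h2'']; simp [hcd]
        -- path [a, cc, b, d]
        refine ⟨[a, cc, b, d],
          by simp [hab, hcd, Ne.symm hca, Ne.symm hda, Ne.symm hdb, hcb], ?_, ?_⟩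
        · rw [hSeq, hE]; ext y; simp; tauto
        · simp only [List.Chain', List.isChain_cons_cons, List.isChain_singleton, and_true]
          exact ⟨fun h => hcb (hBa _ h), fun h => hca (hBb _ (hsym _ _ h)),
            fun h => hda (hBb _ h)⟩
      · obtain ⟨l'', hnd, htf, hch⟩ := IH S'' hss'' (by
          intro hcard2
          obtain ⟨cc, d, hcd, hE⟩ := Finset.card_eq_two.mp hcard2
          have hcS : cc ∈ S'' := hE ▸ (by simp)
          have hdS : d ∈ S'' := hE ▸ (by simp)
          refine ⟨cc, hcS, d, hdS, hcd, ?_⟩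
          intro hBcd
          exact hBspec ⟨cc, hcS, d, hdS, hcd, hBcd, hcard2⟩)
        have hlen : 2 ≤ l''.length := by
          rw [← htf, List.toFinset_card_of_nodup hnd] at hge; omega
        have hne : l'' ≠ [] := by intro h; rw [h] at hlen; simp at hlen
        refine ⟨a :: (l'' ++ [b]), ?_, ?_, ?_⟩
        · rw [List.nodup_cons, List.nodup_append]
          refine ⟨?_, hnd, by simp, ?_⟩
          · simp only [List.mem_append, List.mem_singleton]
            rintro (h | rfl)
            · exact ((hmemS'' a (htf ▸ List.mem_toFinset.mpr h)).2.1) rfl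
            · exact hab rfl
          · intro y hy
            simp only [List.mem_singleton]
            rintro _ rfl rfl
            exact ((hmemS'' y (htf ▸ List.mem_toFinset.mpr hy)).2.2) rfl
        · rw [List.toFinset_cons, List.toFinset_append, htf, hSeq]
          ext y; simp
        · simp only [List.Chain']; rw [List.isChain_cons]
          constructor
          · intro z hz
            intro hB
            have hzb' : z = b := hBa _ hB
            subst hzb'
            have : z ∈ l'' := by
              cases l'' with
              | nil => exact absurd rfl hne
              | cons x xs =>
                simp only [List.cons_append, List.head?_cons, Option.mem_def,
                  Option.some.injEq] at hz
                simp [← hz]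
            exact ((hmemS'' z (htf ▸ List.mem_toFinset.mpr this)).2.2) rfl
          · rw [List.isChain_append]
            refine ⟨hch, by simp, ?_⟩
            intro y hy z hz
            simp only [List.head?_cons, Option.mem_def, Option.some.injEq] at hz
            subst hz
            intro hB
            have hya : y = a := hBb _ (hsym _ _ hB)
            subst hya
            exact ((hmemS'' y (htf ▸ List.mem_toFinset.mpr (List.mem_of_mem_getLast? hy))).2.1) rfl

lemma mono3 {n k : ℕ} (c : Sym2 (Fin n) → Fin k) (j : Fin k) (u v w : Fin n)
    (huv : u ≠ v) (hvw : v ≠ w) (huw : u ≠ w)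
    (h1 : c s(u, v) = j) (h2 : c s(v, w) = j) : hasMonoPath c 3 j := by
  refine ⟨![u, v, w], ?_, ?_⟩
  · intro i1 i2 h
    fin_cases i1 <;> fin_cases i2 <;> simp_all
  · intro i h
    have hi : i < 2 := by omega
    interval_cases i
    · simpa using h1
    · simpa using h2

/-- For `k ≥ 1`, `gr_k(K_3 : P₇, P₃, …, P₃) = 7`: every coloring of `K_n` with colors
`Fin k` for `n ≥ 7` contains a rainbow triangle, a `P₇` monochromatic in color `0`, or a
`P₃` monochromatic in some color `j ≠ 0`; and this fails for `n = 6`. -/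
theorem gallai_ramsey_P7_P3 (k : ℕ) (hk : 1 ≤ k) :
    (∀ n, 7 ≤ n → ∀ c : Sym2 (Fin n) → Fin k,
      hasRainbowTriangle c ∨ hasMonoPath c 7 ⟨0, hk⟩ ∨
        ∃ j : Fin k, j ≠ ⟨0, hk⟩ ∧ hasMonoPath c 3 j) ∧
    (∃ c : Sym2 (Fin 6) → Fin k,
      ¬ hasRainbowTriangle c ∧ ¬ hasMonoPath c 7 ⟨0, hk⟩ ∧
        ∀ j : Fin k, j ≠ ⟨0, hk⟩ → ¬ hasMonoPath c 3 j) := by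
  classical
  constructor
  · intro n hn c
    by_cases hR : hasRainbowTriangle c
    · exact Or.inl hR
    by_cases h3 : ∃ j : Fin k, j ≠ ⟨0, hk⟩ ∧ hasMonoPath c 3 j
    · exact Or.inr (Or.inr h3)
    refine Or.inr (Or.inl ?_)
    set z : Fin k := ⟨0, hk⟩ with hz
    -- no vertex has two incident non-0 edges
    have key : ∀ v u w : Fin n, u ≠ v → w ≠ v → u ≠ w →
        c s(v, u) ≠ z → c s(v, w) ≠ z → False := by
      intro v u w huv hwv huw hu hw
      by_cases heq : c s(v, u) = c s(v, w)
      · exact h3 ⟨c s(v, u), hu, mono3 c _ u v w huv hwv.symm huw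
          (by rw [Sym2.eq_swap]) heq.symm⟩
      · -- use no rainbow triangle on (v, u, w)
        have hr : ¬ (c s(v, u) ≠ c s(v, w) ∧ c s(v, u) ≠ c s(u, w) ∧
            c s(v, w) ≠ c s(u, w)) := by
          intro h'
          exact hR ⟨v, u, w, fun h => huv h.symm, fun h => hwv h.symm, huw,
            h'.1, h'.2.1, h'.2.2⟩
        rcases not_and_or.mp hr with h' | h'
        · exact h' heq
        rcases not_and_or.mp h' with h'' | h''
        · push_neg at h''
          exact h3 ⟨c s(v, u), hu, mono3 c _ v u w huv.symm huw hwv.symm rfl h''.symm⟩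
        · push_neg at h''
          exact h3 ⟨c s(v, w), hw, mono3 c _ v w u hwv.symm
            (fun h => huw h.symm) huv.symm rfl (by rw [Sym2.eq_swap, ← h''])⟩
    set B : Fin n → Fin n → Prop := fun u v => u ≠ v ∧ c s(u, v) ≠ z with hB
    have hsym : ∀ a b, B a b → B b a := by
      rintro a b ⟨h1, h2⟩
      exact ⟨h1.symm, by rwa [Sym2.eq_swap]⟩
    have hirr : ∀ a, ¬ B a a := by rintro a ⟨h, -⟩; exact h rfl
    have hmatch : ∀ v u w, B v u → B v w → u = w := by
      rintro v u w ⟨h1, h2⟩ ⟨h3', h4⟩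
      by_contra hne
      exact key v u w h1.symm h3'.symm hne h2 h4
    have hcard : 7 ≤ (Finset.univ : Finset (Fin n)).card := by
      simpa using hn
    obtain ⟨S, -, hScard⟩ := Finset.exists_subset_card_eq hcard
    obtain ⟨l, hnd, htf, hch⟩ := matching_path B hsym hirr hmatch S
      (by intro h; rw [hScard] at h; omega)
    have hlen : 7 = l.length := by
      have := List.toFinset_card_of_nodup hnd
      rw [htf, hScard] at this
      exact this
    refine ⟨fun i => l.get ⟨i.1, hlen ▸ i.2⟩, ?_, ?_⟩
    · intro i1 i2 h
      have h' := List.nodup_iff_injective_get.mp hnd h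
      have hv : (i1 : ℕ) = i2 := by injection h'
      exact Fin.ext hv
    · intro i h
      have hch' := List.isChain_iff_getElem.mp hch i (by omega)
      have hne : l.get ⟨i, by omega⟩ ≠ l.get ⟨i + 1, by omega⟩ := by
        intro heq
        have h' := List.nodup_iff_injective_get.mp hnd heq
        have : i = i + 1 := by injection h'
        omega
      by_contra hcz
      exact hch' ⟨hne, hcz⟩
  · refine ⟨fun _ => ⟨0, hk⟩, ?_, ?_, ?_⟩
    · rintro ⟨a, b, d, -, -, -, h, -, -⟩
      exact h rfl
    · rintro ⟨v, hinj, -⟩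
      have := Fintype.card_le_of_injective v hinj
      simp at this
    · rintro j hj ⟨v, -, he⟩
      exact hj (he 0 (by omega)).symm
end

section
/- For every integer k ≥ 1, gr_k(K_3 : C_8, P_3, ..., P_3) = 8, where C_8 is sought in color 1 and P_3 in each of the other k − 1 colors. That is, for every n ≥ 8, every edge-coloring of K_n with colors 1, ..., k contains either a rainbow triangle, or a cycle on 8 vertices monochromatic in color 1, or a path on 3 vertices monochromatic in some color j ≥ 2; and this fails for n = 7. -/
/-- A monochromatic path on three given distinct vertices. -/
lemma grc8_path3 {n k : ℕ} (c : Sym2 (Fin n) → Fin k) {j : Fin k} (a b d : Fin n)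
    (hab : a ≠ b) (had : a ≠ d) (hbd : b ≠ d)
    (h1 : c s(a, b) = j) (h2 : c s(b, d) = j) : hasMonoPath c 3 j := by
  refine ⟨![a, b, d], ?_, ?_⟩
  · intro i i' hii'
    fin_cases i <;> fin_cases i' <;> simp_all
  · intro i h
    match i, h with
    | 0, _ => simpa using h1
    | 1, _ => simpa using h2

/-- If there is no rainbow triangle and no monochromatic `P₃` in a color other than `z`,
then no vertex is incident to two edges whose color differs from `z`. -/
lemma grc8_uniq {n k : ℕ} {c : Sym2 (Fin n) → Fin k} {z : Fin k}
    (hr : ¬ hasRainbowTriangle c) (hp : ∀ j : Fin k, j ≠ z → ¬ hasMonoPath c 3 j)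
    {a b d : Fin n} (hab : a ≠ b) (had : a ≠ d) (hbd : b ≠ d)
    (h1 : c s(a, b) ≠ z) (h2 : c s(a, d) ≠ z) : False := by
  by_cases h12 : c s(a, b) = c s(a, d)
  · exact hp _ h1 (grc8_path3 c b a d hab.symm hbd had (by rw [Sym2.eq_swap]) (by rw [← h12]))
  by_cases h31 : c s(b, d) = c s(a, b)
  · exact hp _ h1 (grc8_path3 c a b d hab had hbd rfl h31)
  by_cases h32 : c s(b, d) = c s(a, d)
  · exact hp _ h2 (grc8_path3 c a d b had hab hbd.symm rfl (by rw [Sym2.eq_swap, h32]))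
  · exact hr ⟨a, b, d, hab, had, hbd, h12, fun h => h31 h.symm, fun h => h32 h.symm⟩

/-- Greedy step: extend a "partner-closed" set by a partner-closed pair. -/
lemma grc8_step {n k : ℕ} {c : Sym2 (Fin n) → Fin k} {z : Fin k}
    (hr : ¬ hasRainbowTriangle c) (hp : ∀ j : Fin k, j ≠ z → ¬ hasMonoPath c 3 j)
    (U : Finset (Fin n)) (hU : U.card + 2 ≤ n)
    (hcl : ∀ a ∈ U, ∀ b, b ≠ a → c s(a, b) ≠ z → b ∈ U) :
    ∃ x y : Fin n, x ∉ U ∧ y ∉ U ∧ x ≠ y ∧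
      (∀ b, b ≠ x → c s(x, b) ≠ z → b = y) ∧ (∀ b, b ≠ y → c s(y, b) ≠ z → b = x) := by
  by_cases h : ∃ x, x ∉ U ∧ ∃ w, w ≠ x ∧ c s(x, w) ≠ z
  · obtain ⟨x, hxU, w, hwx, hc⟩ := h
    have hwU : w ∉ U := fun hw => hxU (hcl w hw x hwx.symm (by rwa [Sym2.eq_swap]))
    refine ⟨x, w, hxU, hwU, hwx.symm, ?_, ?_⟩
    · intro b hbx hbz
      by_contra hbw
      exact grc8_uniq hr hp (Ne.symm hbx) (Ne.symm hwx) hbw hbz hc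
    · intro b hbw hbz
      by_contra hbx
      exact grc8_uniq hr hp (Ne.symm hbw) hwx hbx hbz (by rwa [Sym2.eq_swap])
  · push_neg at h
    have hcard : 1 < Uᶜ.card := by
      rw [Finset.card_compl, Fintype.card_fin]; omega
    obtain ⟨x, hx, y, hy, hxy⟩ := Finset.one_lt_card.mp hcard
    rw [Finset.mem_compl] at hx hy
    exact ⟨x, y, hx, hy, hxy,
      fun b hbx hbz => absurd (h x hx b hbx) hbz,
      fun b hby hbz => absurd (h y hy b hby) hbz⟩

/-- Eight distinct vertices whose consecutive connecting edges all have color `z`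
give a monochromatic `C₈`. -/
lemma grc8_cycle8 {n k : ℕ} {c : Sym2 (Fin n) → Fin k} {z : Fin k}
    {a b d e f g p q : Fin n}
    (h1 : a ≠ b) (h2 : a ≠ d) (h3 : a ≠ e) (h4 : a ≠ f) (h5 : a ≠ g) (h6 : a ≠ p) (h7 : a ≠ q)
    (h8 : b ≠ d) (h9 : b ≠ e) (h10 : b ≠ f) (h11 : b ≠ g) (h12 : b ≠ p) (h13 : b ≠ q)
    (h14 : d ≠ e) (h15 : d ≠ f) (h16 : d ≠ g) (h17 : d ≠ p) (h18 : d ≠ q)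
    (h19 : e ≠ f) (h20 : e ≠ g) (h21 : e ≠ p) (h22 : e ≠ q)
    (h23 : f ≠ g) (h24 : f ≠ p) (h25 : f ≠ q)
    (h26 : g ≠ p) (h27 : g ≠ q) (h28 : p ≠ q)
    (e0 : c s(a, b) = z) (e1 : c s(b, d) = z) (e2 : c s(d, e) = z) (e3 : c s(e, f) = z)
    (e4 : c s(f, g) = z) (e5 : c s(g, p) = z) (e6 : c s(p, q) = z) (e7 : c s(q, a) = z) :
    hasMonoCycle c 8 z := by
  refine ⟨fun i => match i with
    | ⟨0, _⟩ => a | ⟨1, _⟩ => b | ⟨2, _⟩ => d | ⟨3, _⟩ => e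
    | ⟨4, _⟩ => f | ⟨5, _⟩ => g | ⟨6, _⟩ => p | ⟨7, _⟩ => q
    | ⟨m + 8, hm⟩ => absurd hm (by omega), ?_, ?_⟩
  · intro i j hij
    fin_cases i <;> fin_cases j <;>
      first
        | rfl
        | exact absurd hij (by assumption)
        | exact absurd hij.symm (by assumption)
  · intro i
    fin_cases i
    · exact e0
    · exact e1
    · exact e2
    · exact e3
    · exact e4
    · exact e5
    · exact e6
    · exact e7

/-- Main combinatorial step: with no rainbow triangle and no off-color monochromatic `P₃`,
there is a `C₈` monochromatic in color `z`. -/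
lemma grc8_key {n k : ℕ} (hn : 8 ≤ n) {c : Sym2 (Fin n) → Fin k} {z : Fin k}
    (hr : ¬ hasRainbowTriangle c) (hp : ∀ j : Fin k, j ≠ z → ¬ hasMonoPath c 3 j) :
    hasMonoCycle c 8 z := by
  obtain ⟨x1, y1, -, -, hd1, cx1, cy1⟩ :=
    grc8_step hr hp ∅ (by simpa using (by omega : 2 ≤ n)) (by simp)
  set U1 : Finset (Fin n) := {x1, y1} with hU1
  have hU1cl : ∀ a ∈ U1, ∀ b, b ≠ a → c s(a, b) ≠ z → b ∈ U1 := by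
    intro a ha b hb hbz
    simp only [hU1, Finset.mem_insert, Finset.mem_singleton] at ha ⊢
    rcases ha with rfl | rfl
    · exact Or.inr (cx1 b hb hbz)
    · exact Or.inl (cy1 b hb hbz)
  have hU1card : U1.card ≤ 2 := (Finset.card_insert_le _ _).trans (by simp)
  obtain ⟨x2, y2, hx2, hy2, hd2, cx2, cy2⟩ := grc8_step hr hp U1 (by omega) hU1cl
  set U2 : Finset (Fin n) := insert x2 (insert y2 U1) with hU2
  have hU2cl : ∀ a ∈ U2, ∀ b, b ≠ a → c s(a, b) ≠ z → b ∈ U2 := by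
    intro a ha b hb hbz
    simp only [hU2, Finset.mem_insert] at ha ⊢
    rcases ha with rfl | rfl | ha
    · exact Or.inr (Or.inl (cx2 b hb hbz))
    · exact Or.inl (cy2 b hb hbz)
    · exact Or.inr (Or.inr (hU1cl a ha b hb hbz))
  have hU2card : U2.card ≤ 4 :=
    (Finset.card_insert_le _ _).trans (Nat.succ_le_succ
      ((Finset.card_insert_le _ _).trans (Nat.succ_le_succ hU1card)))
  obtain ⟨x3, y3, hx3, hy3, hd3, cx3, cy3⟩ := grc8_step hr hp U2 (by omega) hU2cl
  set U3 : Finset (Fin n) := insert x3 (insert y3 U2) with hU3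
  have hU3cl : ∀ a ∈ U3, ∀ b, b ≠ a → c s(a, b) ≠ z → b ∈ U3 := by
    intro a ha b hb hbz
    simp only [hU3, Finset.mem_insert] at ha ⊢
    rcases ha with rfl | rfl | ha
    · exact Or.inr (Or.inl (cx3 b hb hbz))
    · exact Or.inl (cy3 b hb hbz)
    · exact Or.inr (Or.inr (hU2cl a ha b hb hbz))
  have hU3card : U3.card ≤ 6 :=
    (Finset.card_insert_le _ _).trans (Nat.succ_le_succ
      ((Finset.card_insert_le _ _).trans (Nat.succ_le_succ hU2card)))
  obtain ⟨x4, y4, hx4, hy4, hd4, cx4, cy4⟩ := grc8_step hr hp U3 (by omega) hU3cl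
  simp only [hU3, hU2, hU1, Finset.mem_insert, Finset.mem_singleton, not_or]
    at hx2 hy2 hx3 hy3 hx4 hy4
  obtain ⟨hx2x1, hx2y1⟩ := hx2
  obtain ⟨hy2x1, hy2y1⟩ := hy2
  obtain ⟨hx3x2, hx3y2, hx3x1, hx3y1⟩ := hx3
  obtain ⟨hy3x2, hy3y2, hy3x1, hy3y1⟩ := hy3
  obtain ⟨hx4x3, hx4y3, hx4x2, hx4y2, hx4x1, hx4y1⟩ := hx4
  obtain ⟨hy4x3, hy4y3, hy4x2, hy4y2, hy4x1, hy4y1⟩ := hy4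
  have e0 : c s(x1, x2) = z := by
    by_contra h; exact hx2y1 (cx1 x2 hx2x1 h)
  have e1 : c s(x2, x3) = z := by
    by_contra h; exact hx3y2 (cx2 x3 hx3x2 h)
  have e2 : c s(x3, x4) = z := by
    by_contra h; exact hx4y3 (cx3 x4 hx4x3 h)
  have e3 : c s(x4, y1) = z := by
    by_contra h; exact hy4y1 ((cx4 y1 (Ne.symm hx4y1) h).symm)
  have e4 : c s(y1, y2) = z := by
    by_contra h; exact hy2x1 (cy1 y2 hy2y1 h)
  have e5 : c s(y2, y3) = z := by
    by_contra h; exact hy3x2 (cy2 y3 hy3y2 h)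
  have e6 : c s(y3, y4) = z := by
    by_contra h; exact hy4x3 (cy3 y4 hy4y3 h)
  have e7 : c s(y4, x1) = z := by
    by_contra h; exact hx4x1 ((cy4 x1 (Ne.symm hy4x1) h).symm)
  exact grc8_cycle8
    (Ne.symm hx2x1) (Ne.symm hx3x1) (Ne.symm hx4x1) hd1 (Ne.symm hy2x1) (Ne.symm hy3x1)
      (Ne.symm hy4x1)
    (Ne.symm hx3x2) (Ne.symm hx4x2) hx2y1 hd2 (Ne.symm hy3x2) (Ne.symm hy4x2)
    (Ne.symm hx4x3) hx3y1 hx3y2 hd3 (Ne.symm hy4x3)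
    hx4y1 hx4y2 hx4y3 hd4
    (Ne.symm hy2y1) (Ne.symm hy3y1) (Ne.symm hy4y1)
    (Ne.symm hy3y2) (Ne.symm hy4y2)
    (Ne.symm hy4y3)
    e0 e1 e2 e3 e4 e5 e6 e7

/-- For `k ≥ 1`, `gr_k(K_3 : C₈, P₃, …, P₃) = 8`: every coloring of `K_n` with colors
`Fin k` for `n ≥ 8` contains a rainbow triangle, a `C₈` monochromatic in color `0`, or a
`P₃` monochromatic in some color `j ≠ 0`; and this fails for `n = 7`. -/
theorem gallai_ramsey_C8_P3 (k : ℕ) (hk : 1 ≤ k) :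
    (∀ n, 8 ≤ n → ∀ c : Sym2 (Fin n) → Fin k,
      hasRainbowTriangle c ∨ hasMonoCycle c 8 ⟨0, hk⟩ ∨
        ∃ j : Fin k, j ≠ ⟨0, hk⟩ ∧ hasMonoPath c 3 j) ∧
    (∃ c : Sym2 (Fin 7) → Fin k,
      ¬ hasRainbowTriangle c ∧ ¬ hasMonoCycle c 8 ⟨0, hk⟩ ∧
        ∀ j : Fin k, j ≠ ⟨0, hk⟩ → ¬ hasMonoPath c 3 j) := by
  constructor
  · intro n hn c
    by_cases hr : hasRainbowTriangle c
    · exact Or.inl hr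
    by_cases hp : ∃ j : Fin k, j ≠ ⟨0, hk⟩ ∧ hasMonoPath c 3 j
    · exact Or.inr (Or.inr hp)
    · push_neg at hp
      exact Or.inr (Or.inl (grc8_key hn hr hp))
  · refine ⟨fun _ => ⟨0, hk⟩, ?_, ?_, ?_⟩
    · rintro ⟨a, b, d, -, -, -, h1, -⟩
      exact h1 rfl
    · rintro ⟨v, hv, -⟩
      have := Fintype.card_le_of_injective v hv
      simp at this
    · rintro j hj ⟨v, -, hcol⟩
      exact hj ((hcol 0 (by norm_num)).symm)
end
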